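/- arXiv:2204.12770 — 7 statements merged into one kernel-verified Lean document; each statement's English description precedes it below -/
import Mathlib

section
/- Let (X_t) be a non-negative integrable random process adapted to a filtration (F_t), and let T be a stopping time with respect to (F_t). If there exists δ > 0 such that for all t, (X_t − E[X_{t+1} | F_t])·1{t < T} ≥ δ·1{t < T}, then E[T | F_0] ≤ (X_0 − E[X_T | F_0]) / δ. -/
/-!
The process `Y n = X (min n T) + δ * min n T` is a nonnegative supermartingale: before `T` the
drift condition says exactly that `X n + δ * n` decreases in conditional expectation, and after
`T` nothing moves. As `n → ∞`, `Y n → X T + δ T` pointwise, so Fatou's lemma applied on each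
`ℱ 0`-measurable set gives `E[X T + δ T | ℱ 0] ≤ Y 0 = X 0`; in particular `T` is integrable, and
linearity of conditional expectation rearranges this into the claim.
-/

open MeasureTheory Filter Topology

namespace MeasureTheory

section

variable {α : Type*} {m₀ : MeasurableSpace α} {μ : Measure α}

theorem integrable_and_integral_le_of_tendsto {f : ℕ → α → ℝ} {F : α → ℝ} {C : ℝ}
    (hf : ∀ n, Integrable (f n) μ) (hf_nonneg : ∀ n, 0 ≤ᵐ[μ] f n)
    (hlim : ∀ᵐ a ∂μ, Tendsto (fun n => f n a) atTop (𝓝 (F a)))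
    (hC : ∀ n, ∫ a, f n a ∂μ ≤ C) :
    Integrable F μ ∧ ∫ a, F a ∂μ ≤ C := by
  have hF_meas : AEStronglyMeasurable F μ :=
    aestronglyMeasurable_of_tendsto_ae atTop (fun n => (hf n).1) hlim
  have hF_nonneg : 0 ≤ᵐ[μ] F := by
    filter_upwards [hlim, ae_all_iff.2 hf_nonneg] with a ha h0
    exact ge_of_tendsto' ha h0
  have hlintegral : ∫⁻ a, ENNReal.ofReal (F a) ∂μ ≤ ENNReal.ofReal C :=
    calc ∫⁻ a, ENNReal.ofReal (F a) ∂μ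
        = ∫⁻ a, liminf (fun n => ENNReal.ofReal (f n a)) atTop ∂μ := by
          refine lintegral_congr_ae ?_
          filter_upwards [hlim] with a ha
          exact ((ENNReal.continuous_ofReal.tendsto _).comp ha).liminf_eq.symm
      _ ≤ liminf (fun n => ∫⁻ a, ENNReal.ofReal (f n a) ∂μ) atTop :=
          lintegral_liminf_le' fun n => (hf n).aemeasurable.ennreal_ofReal
      _ ≤ ENNReal.ofReal C := by
          refine liminf_le_of_frequently_le' (Frequently.of_forall fun n => ?_)
          rw [← ofReal_integral_eq_lintegral_ofReal (hf n) (hf_nonneg n)]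
          exact ENNReal.ofReal_le_ofReal (hC n)
  have hC_nonneg : 0 ≤ C := (integral_nonneg_of_ae (hf_nonneg 0)).trans (hC 0)
  refine ⟨⟨hF_meas, (hasFiniteIntegral_iff_ofReal hF_nonneg).2 ?_⟩, ?_⟩
  · exact hlintegral.trans_lt ENNReal.ofReal_lt_top
  · rw [integral_eq_lintegral_of_nonneg_ae hF_nonneg hF_meas]
    exact ENNReal.toReal_le_of_le_ofReal hC_nonneg hlintegral

theorem condExp_le_of_forall_setIntegral_le {m : MeasurableSpace α} (hm : m ≤ m₀)
    [SigmaFinite (μ.trim hm)] {f g : α → ℝ} (hf : Integrable f μ) (hg : Integrable g μ)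
    (hg_meas : StronglyMeasurable[m] g)
    (hfg : ∀ s, MeasurableSet[m] s → ∫ a in s, f a ∂μ ≤ ∫ a in s, g a ∂μ) :
    μ[f | m] ≤ᵐ[μ] g := by
  refine ae_le_of_ae_le_trim (hm := hm) <| ae_le_of_forall_setIntegral_le
    (integrable_condExp.trim hm stronglyMeasurable_condExp) (hg.trim hm hg_meas) fun s hs _ => ?_
  rw [← setIntegral_trim hm stronglyMeasurable_condExp hs, ← setIntegral_trim hm hg_meas hs,
    setIntegral_condExp hm hf hs]
  exact hfg s hs

theorem condExp_le_div_of_condExp_add_mul_le {m : MeasurableSpace α} {f g h : α → ℝ} {δ : ℝ}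
    (hδ : 0 < δ) (hf : Integrable f μ) (hg : Integrable g μ)
    (hle : μ[fun a => f a + δ * g a | m] ≤ᵐ[μ] h) :
    μ[g | m] ≤ᵐ[μ] fun a => (h a - μ[f | m] a) / δ := by
  filter_upwards [hle, condExp_add hf (hg.const_mul δ) m, condExp_smul δ g m]
    with a h_le h_add h_smul
  have h_split : μ[fun a => f a + δ * g a | m] a = μ[f | m] a + δ * μ[g | m] a :=
    h_add.trans (congrArg _ h_smul)
  rw [le_div_iff₀ hδ]
  linarith

end

section

variable {Ω : Type*} {m0 : MeasurableSpace Ω} {μ : Measure Ω}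

theorem stoppedProcess_add_one {E : Type*} [AddCommGroup E] (u : ℕ → Ω → E)
    (τ : Ω → WithTop ℕ) (n : ℕ) :
    stoppedProcess u τ (n + 1) =
      stoppedProcess u τ n + {ω | (n : WithTop ℕ) < τ ω}.indicator (u (n + 1) - u n) := by
  ext ω
  by_cases h : ω ∈ {ω | (n : WithTop ℕ) < τ ω}
  · have h_lt : (n : WithTop ℕ) < τ ω := h
    have h_succ_le : ((n + 1 : ℕ) : WithTop ℕ) ≤ τ ω := by
      cases hτ : τ ω with
      | top => exact le_top
      | coe k => exact WithTop.coe_le_coe.2 (WithTop.coe_lt_coe.1 (hτ ▸ h_lt))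
    rw [Pi.add_apply, stoppedProcess_eq_of_le (i := n + 1) h_succ_le,
      stoppedProcess_eq_of_le (i := n) h_lt.le, Set.indicator_of_mem h, Pi.sub_apply,
      add_sub_cancel]
  · have h_le : τ ω ≤ n := not_lt.1 h
    rw [Pi.add_apply, stoppedProcess_eq_of_ge (i := n) h_le,
      stoppedProcess_eq_of_ge (i := n + 1) (h_le.trans (WithTop.coe_le_coe.2 n.le_succ)),
      Set.indicator_of_notMem h, add_zero]

theorem supermartingale_stoppedProcess_of_condExp_succ_le [IsFiniteMeasure μ]
    {ℱ : Filtration ℕ m0} {Z : ℕ → Ω → ℝ} {τ : Ω → WithTop ℕ}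
    (hZ : Adapted ℱ Z) (hint : ∀ n, Integrable (Z n) μ) (hτ : IsStoppingTime ℱ τ)
    (hdrift : ∀ n : ℕ, ∀ᵐ ω ∂μ, (n : WithTop ℕ) < τ ω → μ[Z (n + 1) | ℱ n] ω ≤ Z n ω) :
    Supermartingale (stoppedProcess Z τ) ℱ μ := by
  have hadapt := hZ.stronglyAdapted.stoppedProcess_of_discrete hτ
  refine supermartingale_nat hadapt (integrable_stoppedProcess hτ hint) fun n => ?_
  have hgt : MeasurableSet[ℱ n] {ω | (n : WithTop ℕ) < τ ω} := hτ.measurableSet_gt n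
  have hinc : Integrable ({ω | (n : WithTop ℕ) < τ ω}.indicator (Z (n + 1) - Z n)) μ :=
    ((hint _).sub (hint _)).indicator (ℱ.le n _ hgt)
  rw [stoppedProcess_add_one]
  filter_upwards [condExp_add (integrable_stoppedProcess hτ hint n) hinc (ℱ n),
    condExp_indicator ((hint _).sub (hint _)) hgt, condExp_sub (hint (n + 1)) (hint n) (ℱ n),
    hdrift n] with ω h_add h_ind h_sub h_drift
  rw [h_add, Pi.add_apply, condExp_of_stronglyMeasurable (ℱ.le n) (hadapt n)
    (integrable_stoppedProcess hτ hint n), h_ind, add_le_iff_nonpos_right]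
  by_cases h : ω ∈ {ω | (n : WithTop ℕ) < τ ω}
  · rw [Set.indicator_of_mem h, h_sub, Pi.sub_apply,
      condExp_of_stronglyMeasurable (ℱ.le n) (hZ.stronglyAdapted n) (hint n), sub_nonpos]
    exact h_drift h
  · rw [Set.indicator_of_notMem h]

theorem supermartingale_stoppedProcess_add_mul [IsFiniteMeasure μ] {ℱ : Filtration ℕ m0}
    {X : ℕ → Ω → ℝ} {τ : Ω → WithTop ℕ} {δ : ℝ} (hX : Adapted ℱ X)
    (hint : ∀ n, Integrable (X n) μ) (hτ : IsStoppingTime ℱ τ)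
    (hdrift : ∀ n : ℕ, ∀ᵐ ω ∂μ, (n : WithTop ℕ) < τ ω → δ ≤ X n ω - μ[X (n + 1) | ℱ n] ω) :
    Supermartingale (stoppedProcess (fun n ω => X n ω + δ * n) τ) ℱ μ := by
  refine supermartingale_stoppedProcess_of_condExp_succ_le (hX.add fun n => measurable_const)
    (fun n => (hint n).add (integrable_const _)) hτ fun n => ?_
  filter_upwards [hdrift n,
    condExp_add (hint (n + 1)) (integrable_const (δ * (n + 1 : ℕ))) (ℱ n)] with ω h_drift h_add h_lt
  change μ[X (n + 1) + fun _ => δ * ((n + 1 : ℕ) : ℝ) | ℱ n] ω ≤ X n ω + δ * n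
  rw [h_add, Pi.add_apply, condExp_const (ℱ.le n)]
  push_cast
  linarith [h_drift h_lt]

theorem Supermartingale.integrable_and_condExp_le_of_tendsto [IsFiniteMeasure μ]
    {ℱ : Filtration ℕ m0} {Y : ℕ → Ω → ℝ} {F : Ω → ℝ} (hY : Supermartingale Y ℱ μ)
    (hY_nonneg : ∀ n, 0 ≤ᵐ[μ] Y n) (hlim : ∀ᵐ ω ∂μ, Tendsto (fun n => Y n ω) atTop (𝓝 (F ω)))
    (i : ℕ) : Integrable F μ ∧ μ[F | ℱ i] ≤ᵐ[μ] Y i := by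
  have hlim_shift : ∀ᵐ ω ∂μ, Tendsto (fun n => Y (n + i) ω) atTop (𝓝 (F ω)) :=
    hlim.mono fun ω hω => hω.comp (tendsto_add_atTop_nat i)
  have hset : ∀ s, MeasurableSet[ℱ i] s →
      Integrable F (μ.restrict s) ∧ ∫ ω in s, F ω ∂μ ≤ ∫ ω in s, Y i ω ∂μ := fun s hs =>
    integrable_and_integral_le_of_tendsto (fun n => (hY.integrable _).restrict)
      (fun n => ae_restrict_of_ae (hY_nonneg _)) (ae_restrict_of_ae hlim_shift)
      fun n => hY.setIntegral_le (Nat.le_add_left i n) hs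
  have hF : Integrable F μ := by simpa using (hset Set.univ MeasurableSet.univ).1
  exact ⟨hF, condExp_le_of_forall_setIntegral_le (ℱ.le i) hF (hY.integrable i)
    (hY.stronglyAdapted i) fun s hs => (hset s hs).2⟩

end

end MeasureTheory

/-- Additive drift theorem (upper bound). -/
theorem additive_drift_upper
    {Ω : Type*} {m0 : MeasurableSpace Ω} (μ : Measure Ω) [IsProbabilityMeasure μ]
    (ℱ : Filtration ℕ m0) (X : ℕ → Ω → ℝ) (T : Ω → ℕ)
    (hT : IsStoppingTime ℱ (fun ω => (T ω : WithTop ℕ)))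
    (hadapt : Adapted ℱ X)
    (hint : ∀ t, Integrable (X t) μ)
    (hnonneg : ∀ t ω, 0 ≤ X t ω)
    (δ : ℝ) (hδ : 0 < δ)
    (hdrift : ∀ t : ℕ, ∀ᵐ ω ∂μ,
      δ * Set.indicator {ω' | t < T ω'} (fun _ => (1 : ℝ)) ω ≤
        (X t ω - (μ[X (t + 1) | ℱ t]) ω) *
          Set.indicator {ω' | t < T ω'} (fun _ => (1 : ℝ)) ω) :
    (μ[fun ω => (T ω : ℝ) | ℱ 0]) ≤ᵐ[μ]
      fun ω => (X 0 ω - (μ[fun ω' => X (T ω') ω' | ℱ 0]) ω) / δ := by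
  have h_drift (t : ℕ) :
      ∀ᵐ ω ∂μ, (t : WithTop ℕ) < T ω → δ ≤ X t ω - μ[X (t + 1) | ℱ t] ω := by
    filter_upwards [hdrift t] with ω h h_lt
    have h_mem : ω ∈ {ω' | t < T ω'} := by exact_mod_cast h_lt
    simpa [Set.indicator_of_mem h_mem] using h
  set Y := stoppedProcess (fun n ω => X n ω + δ * n) fun ω => (T ω : WithTop ℕ)
  have hY := supermartingale_stoppedProcess_add_mul hadapt hint hT h_drift
  have hY_nonneg (n : ℕ) : 0 ≤ᵐ[μ] Y n :=
    ae_of_all _ fun ω => add_nonneg (hnonneg _ ω) (by positivity)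
  have hY_lim : ∀ᵐ ω ∂μ, Tendsto (fun n => Y n ω) atTop (𝓝 (X (T ω) ω + δ * T ω)) :=
    ae_of_all _ fun ω => tendsto_atTop_of_eventually_const (i₀ := T ω) fun n hn =>
      stoppedProcess_eq_of_ge (i := n) (WithTop.coe_le_coe.2 hn)
  have hY_zero : Y 0 = X 0 := funext fun ω => by
    rw [show Y 0 ω = X 0 ω + δ * (0 : ℕ) from
      stoppedProcess_eq_of_le (i := 0) (WithTop.coe_le_coe.2 (T ω).zero_le)]
    simp
  obtain ⟨hF_int, hF_le⟩ := hY.integrable_and_condExp_le_of_tendsto hY_nonneg hY_lim 0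
  have hT_int : Integrable (fun ω => (T ω : ℝ)) μ := by
    refine (hF_int.div_const δ).mono'
      ((measurable_of_countable fun x : WithTop ℕ => ((x.untopD 0 : ℕ) : ℝ)).comp
        hT.measurable').aestronglyMeasurable (ae_of_all _ fun ω => ?_)
    rw [Real.norm_eq_abs, abs_of_nonneg (by positivity), le_div_iff₀ hδ]
    linarith [hnonneg (T ω) ω]
  have hXT_int : Integrable (fun ω => X (T ω) ω) μ :=
    (hF_int.sub (hT_int.const_mul δ)).congr (ae_of_all _ fun ω => by simp)
  exact condExp_le_div_of_condExp_add_mul_le hδ hXT_int hT_int (hY_zero ▸ hF_le)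
end

section
/- Let S be an integrable stopping time with respect to a filtration (F_i), and let (X_i)_{i≥1} be a random process over the non-negative extended reals such that Σ_{i=1}^{S} X_i is integrable and there exists c ∈ ℝ with E[|X_{i+1} − E[X_{i+1}|F_i]| | F_i]·1{i < S} ≤ c for all i ∈ ℕ. Then E[Σ_{i=1}^{S} X_i | F_0] = E[Σ_{i=1}^{S} E[X_i | F_{i−1}] | F_0]. -/
open MeasureTheory Set

open scoped ENNReal

/-!
Since {i < S} ∈ ℱ i, on every A ∈ ℱ 0 the defining property of μ[X (i+1) | ℱ i] gives
E[X (i+1); {i < S} ∩ A] = E[μ[X (i+1) | ℱ i]; {i < S} ∩ A]. Writing ∑_{i=1}^S X i as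
∑_i X (i+1) 1{i < S}, nonnegativity lets us sum these identities in `ℝ≥0∞` (monotone
convergence), so both sums have the same integral over every A ∈ ℱ 0, which is all the
conditional expectation given ℱ 0 sees; taking A = Ω also transfers integrability.
-/

theorem Finset.sum_Icc_one_eq_sum_range {M : Type*} [AddCommMonoid M] (v : ℕ → M) (n : ℕ) :
    ∑ i ∈ Finset.Icc 1 n, v i = ∑ i ∈ Finset.range n, v (i + 1) := by
  rw [Finset.range_eq_Ico, Finset.sum_Ico_add', zero_add, Finset.Ico_add_one_right_eq_Icc]

theorem Measurable.sum_range_of_measurable_length {Ω E : Type*} [MeasurableSpace Ω]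
    [MeasurableSpace E] [AddCommMonoid E] [MeasurableAdd₂ E] {Z : ℕ → Ω → E}
    (hZ : ∀ i, Measurable (Z i))
    {N : Ω → ℕ} (hN : Measurable N) : Measurable fun ω => ∑ i ∈ Finset.range (N ω), Z i ω := by
  have h : Measurable fun p : Ω × ℕ => ∑ i ∈ Finset.range p.2, Z i p.1 :=
    measurable_from_prod_countable_left fun n =>
      Finset.measurable_sum (Finset.range n) fun i _ => hZ i
  exact h.comp (measurable_id.prodMk hN)

namespace MeasureTheory

variable {Ω : Type*} {m m0 : MeasurableSpace Ω} {μ : Measure Ω}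

theorem lintegral_sum_range_eq_tsum_setLIntegral {Y : ℕ → Ω → ℝ≥0∞}
    (hY : ∀ i, AEMeasurable (Y i) μ) {N : Ω → ℕ} (hN : ∀ i, MeasurableSet {ω | i < N ω}) :
    ∫⁻ ω, ∑ i ∈ Finset.range (N ω), Y i ω ∂μ = ∑' i, ∫⁻ ω in {ω | i < N ω}, Y i ω ∂μ := by
  have h_tsum (ω : Ω) :
      ∑ i ∈ Finset.range (N ω), Y i ω = ∑' i, {ω | i < N ω}.indicator (Y i) ω := by
    rw [tsum_eq_sum (s := Finset.range (N ω)) fun i hi =>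
      indicator_of_notMem (by simpa using hi) _]
    exact Finset.sum_congr rfl fun i hi => (indicator_of_mem (by simpa using hi) _).symm
  simp_rw [h_tsum]
  rw [lintegral_tsum fun i => (hY i).indicator (hN i)]
  exact tsum_congr fun i => lintegral_indicator (hN i) _

theorem setLIntegral_ofReal_condExp (hm : m ≤ m0) [SigmaFinite (μ.trim hm)] {f : Ω → ℝ}
    (hf : Integrable f μ) (hf_nonneg : 0 ≤ᵐ[μ] f) {s : Set Ω} (hs : MeasurableSet[m] s) :
    ∫⁻ ω in s, ENNReal.ofReal (μ[f | m] ω) ∂μ = ∫⁻ ω in s, ENNReal.ofReal (f ω) ∂μ := by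
  rw [← ofReal_integral_eq_lintegral_ofReal integrable_condExp.integrableOn
      (ae_restrict_of_ae (condExp_nonneg hf_nonneg)),
    ← ofReal_integral_eq_lintegral_ofReal hf.integrableOn (ae_restrict_of_ae hf_nonneg),
    setIntegral_condExp hm hf hs]

theorem condExp_ae_eq_of_setLIntegral_ofReal_eq (hm : m ≤ m0) [SigmaFinite (μ.trim hm)]
    {f g : Ω → ℝ} (hf : Integrable f μ) (hf_nonneg : 0 ≤ᵐ[μ] f)
    (hg : AEStronglyMeasurable g μ) (hg_nonneg : 0 ≤ᵐ[μ] g)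
    (h_eq : ∀ s, MeasurableSet[m] s →
      ∫⁻ ω in s, ENNReal.ofReal (g ω) ∂μ = ∫⁻ ω in s, ENNReal.ofReal (f ω) ∂μ) :
    μ[f | m] =ᵐ[μ] μ[g | m] := by
  have h_setIntegral (s : Set Ω) (hs : MeasurableSet[m] s) :
      ∫ ω in s, g ω ∂μ = ∫ ω in s, f ω ∂μ := by
    rw [integral_eq_lintegral_of_nonneg_ae (ae_restrict_of_ae hg_nonneg) hg.restrict,
      integral_eq_lintegral_of_nonneg_ae (ae_restrict_of_ae hf_nonneg) hf.1.restrict, h_eq s hs]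
  have hg_int : Integrable g μ := by
    refine ⟨hg, (hasFiniteIntegral_iff_ofReal hg_nonneg).2 ?_⟩
    have h_univ := h_eq univ MeasurableSet.univ
    rw [Measure.restrict_univ] at h_univ
    exact h_univ ▸ (hasFiniteIntegral_iff_ofReal hf_nonneg).1 hf.2
  refine (ae_eq_condExp_of_forall_setIntegral_eq hm hf
    (fun s _ _ => integrable_condExp.integrableOn) (fun s hs _ => ?_)
    stronglyMeasurable_condExp.aestronglyMeasurable).symm
  rw [setIntegral_condExp hm hg_int hs, h_setIntegral s hs]


section Stopped

variable {ℱ : Filtration ℕ m0} [SigmaFiniteFiltration μ ℱ] {Y : ℕ → Ω → ℝ}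
  {τ : Ω → ℕ}

theorem setLIntegral_sum_range_ofReal_condExp (hY : ∀ i, Integrable (Y i) μ)
    (hY_nonneg : ∀ i, 0 ≤ᵐ[μ] Y i) (hτ : IsStoppingTime ℱ fun ω => (τ ω : WithTop ℕ))
    {A : Set Ω} (hA : MeasurableSet[ℱ 0] A) :
    ∫⁻ ω in A, ∑ i ∈ Finset.range (τ ω), ENNReal.ofReal (μ[Y i | ℱ i] ω) ∂μ
      = ∫⁻ ω in A, ∑ i ∈ Finset.range (τ ω), ENNReal.ofReal (Y i ω) ∂μ := by
  have h_lt (i : ℕ) : MeasurableSet[ℱ i] {ω | i < τ ω} := by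
    simpa using hτ.measurableSet_gt i
  rw [lintegral_sum_range_eq_tsum_setLIntegral
      (fun i => (stronglyMeasurable_condExp.mono (ℱ.le i)).measurable.ennreal_ofReal.aemeasurable)
      fun i => ℱ.le i _ (h_lt i),
    lintegral_sum_range_eq_tsum_setLIntegral
      (fun i => (hY i).aemeasurable.ennreal_ofReal.restrict) fun i => ℱ.le i _ (h_lt i)]
  refine tsum_congr fun i => ?_
  rw [Measure.restrict_restrict (ℱ.le i _ (h_lt i))]
  exact setLIntegral_ofReal_condExp (ℱ.le i) (hY i) (hY_nonneg i)
    ((h_lt i).inter (ℱ.mono (Nat.zero_le i) _ hA))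

theorem condExp_sum_range_ae_eq_condExp_sum_range_condExp (hY : ∀ i, Integrable (Y i) μ)
    (hY_nonneg : ∀ i, 0 ≤ᵐ[μ] Y i) (hτ : IsStoppingTime ℱ fun ω => (τ ω : WithTop ℕ))
    (h_sum : Integrable (fun ω => ∑ i ∈ Finset.range (τ ω), Y i ω) μ) :
    μ[fun ω => ∑ i ∈ Finset.range (τ ω), Y i ω | ℱ 0]
      =ᵐ[μ] μ[fun ω => ∑ i ∈ Finset.range (τ ω), μ[Y i | ℱ i] ω | ℱ 0] := by
  have hτ_meas : Measurable τ := measurable_to_countable' fun n => by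
    simpa [Set.preimage] using ℱ.le n _ (hτ.measurableSet_eq_of_countable n)
  have h_nonneg : ∀ᵐ ω ∂μ, ∀ i, 0 ≤ Y i ω := ae_all_iff.2 hY_nonneg
  have h_condExp_nonneg : ∀ᵐ ω ∂μ, ∀ i, 0 ≤ μ[Y i | ℱ i] ω :=
    ae_all_iff.2 fun i => condExp_nonneg (hY_nonneg i)
  have h_meas : Measurable fun ω => ∑ i ∈ Finset.range (τ ω), μ[Y i | ℱ i] ω :=
    Measurable.sum_range_of_measurable_length
      (fun i => (stronglyMeasurable_condExp.mono (ℱ.le i)).measurable) hτ_meas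
  refine condExp_ae_eq_of_setLIntegral_ofReal_eq (ℱ.le 0) h_sum
    (h_nonneg.mono fun ω hω => Finset.sum_nonneg fun i _ => hω i) h_meas.aestronglyMeasurable
    (h_condExp_nonneg.mono fun ω hω => Finset.sum_nonneg fun i _ => hω i) fun A hA => ?_
  have h_ofReal_sum {Z : ℕ → Ω → ℝ} (hZ : ∀ᵐ ω ∂μ, ∀ i, 0 ≤ Z i ω) :
      (fun ω => ENNReal.ofReal (∑ i ∈ Finset.range (τ ω), Z i ω))
        =ᵐ[μ] fun ω => ∑ i ∈ Finset.range (τ ω), ENNReal.ofReal (Z i ω) :=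
    hZ.mono fun ω hω => ENNReal.ofReal_sum_of_nonneg fun i _ => hω i
  rw [lintegral_congr_ae (ae_restrict_of_ae (h_ofReal_sum h_condExp_nonneg)),
    lintegral_congr_ae (ae_restrict_of_ae (h_ofReal_sum h_nonneg))]
  exact setLIntegral_sum_range_ofReal_condExp hY hY_nonneg hτ hA

end Stopped

end MeasureTheory

theorem generalized_wald_general
    {Ω : Type*} {m0 : MeasurableSpace Ω} (μ : Measure Ω) [IsProbabilityMeasure μ]
    (ℱ : Filtration ℕ m0) (X : ℕ → Ω → ℝ) (S : Ω → ℕ)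
    (hS : IsStoppingTime ℱ (fun ω => (S ω : WithTop ℕ)))
    (hXnonneg : ∀ i ω, 1 ≤ i → 0 ≤ X i ω)
    (hXint : ∀ i, Integrable (X i) μ)
    (hsumint : Integrable (fun ω => ∑ i ∈ Finset.Icc 1 (S ω), X i ω) μ) :
    (μ[fun ω => ∑ i ∈ Finset.Icc 1 (S ω), X i ω | ℱ 0]) =ᵐ[μ]
      (μ[fun ω => ∑ i ∈ Finset.Icc 1 (S ω), (μ[X i | ℱ (i - 1)]) ω | ℱ 0]) := by
  simp only [Finset.sum_Icc_one_eq_sum_range, Nat.add_sub_cancel] at hsumint ⊢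
  exact condExp_sum_range_ae_eq_condExp_sum_range_condExp (fun i => hXint (i + 1))
    (fun i => ae_of_all μ fun ω => hXnonneg (i + 1) ω (Nat.le_add_left 1 i)) hS hsumint

/-- Generalized Wald's equation. -/
theorem generalized_wald
    {Ω : Type*} {m0 : MeasurableSpace Ω} (μ : Measure Ω) [IsProbabilityMeasure μ]
    (ℱ : Filtration ℕ m0) (X : ℕ → Ω → ℝ) (S : Ω → ℕ)
    (hS : IsStoppingTime ℱ (fun ω => (S ω : WithTop ℕ)))
    (hSint : Integrable (fun ω => (S ω : ℝ)) μ)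
    (hXnonneg : ∀ i ω, 1 ≤ i → 0 ≤ X i ω)
    (hXint : ∀ i, Integrable (X i) μ)
    (hsumint : Integrable (fun ω => ∑ i ∈ Finset.Icc 1 (S ω), X i ω) μ)
    (c : ℝ)
    (hbdd : ∀ i : ℕ, ∀ᵐ ω ∂μ,
      (μ[fun ω' => |X (i + 1) ω' - (μ[X (i + 1) | ℱ i]) ω'| | ℱ i]) ω *
          Set.indicator {ω' | i < S ω'} (fun _ => (1 : ℝ)) ω ≤ c) :
    (μ[fun ω => ∑ i ∈ Finset.Icc 1 (S ω), X i ω | ℱ 0]) =ᵐ[μ]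
      (μ[fun ω => ∑ i ∈ Finset.Icc 1 (S ω), (μ[X i | ℱ (i - 1)]) ω | ℱ 0]) :=
  generalized_wald_general μ ℱ X S hS hXnonneg hXint hsumint
end

section
/- Let S be a stopping time with E[S] < ∞ with respect to a filtration (F_i), and let (X_i) be a submartingale such that there is c ∈ ℝ with E[|X_i − X_{i+1}| | F_i]·1{i < S} ≤ c for all i ∈ ℕ. Then E[X_S | F_0] ≥ X_0. -/
/-!
Stopping at `S ∧ n` gives a submartingale, so `X 0 ≤ E[X (S ∧ n) | ℱ 0]` for every `n`. All the
`X (S ∧ n)` are dominated by `|X 0| + ∑_{i < S} |X i - X (i+1)|`, whose expectation is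
`∑ᵢ E[|X i - X (i+1)|; i < S] ≤ c ∑ᵢ P(i < S) = c E[S] < ∞`, since `{i < S}` is `ℱ i`-measurable.
Conditional dominated convergence (tested against `ℱ 0`-sets) then lets `n → ∞`.
-/

open MeasureTheory Filter Set Finset
open scoped ENNReal Topology

theorem norm_le_norm_zero_add_sum_range_norm_sub {E : Type*} [SeminormedAddCommGroup E]
    (a : ℕ → E) {k n : ℕ} (hkn : k ≤ n) :
    ‖a k‖ ≤ ‖a 0‖ + ∑ i ∈ range n, ‖a i - a (i + 1)‖ := by
  have hdist : ‖a k - a 0‖ ≤ ∑ i ∈ range k, ‖a i - a (i + 1)‖ := by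
    rw [← dist_eq_norm, dist_comm]
    simpa only [dist_eq_norm] using dist_le_range_sum_dist a k
  calc ‖a k‖ ≤ ‖a 0‖ + ‖a k - a 0‖ := norm_le_norm_add_norm_sub' _ _
    _ ≤ ‖a 0‖ + ∑ i ∈ range n, ‖a i - a (i + 1)‖ := by
        gcongr
        exact hdist.trans (sum_le_sum_of_subset_of_nonneg (range_subset_range.2 hkn)
          fun _ _ _ => norm_nonneg _)

section

variable {Ω : Type*} {m0 : MeasurableSpace Ω} {μ : Measure Ω}

theorem lintegral_sum_range_eq_tsum_setLIntegral {S : Ω → ℕ} (hS : Measurable S)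
    {f : ℕ → Ω → ℝ≥0∞} (hf : ∀ i, AEMeasurable (f i) μ) :
    ∫⁻ ω, ∑ i ∈ range (S ω), f i ω ∂μ = ∑' i, ∫⁻ ω in {ω | i < S ω}, f i ω ∂μ := by
  have hA : ∀ i, MeasurableSet {ω | i < S ω} := fun i => measurableSet_lt measurable_const hS
  have hsum : ∀ ω, ∑ i ∈ range (S ω), f i ω = ∑' i, {ω | i < S ω}.indicator (f i) ω := by
    intro ω
    rw [sum_eq_tsum_indicator]
    congr 1 with i
    simp [Set.indicator_apply]
  simp_rw [hsum, ← lintegral_indicator (hA _)]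
  exact lintegral_tsum fun i => (hf i).indicator (hA i)

theorem lintegral_natCast_eq_tsum_measure_lt {S : Ω → ℕ} (hS : Measurable S) :
    ∫⁻ ω, (S ω : ℝ≥0∞) ∂μ = ∑' i, μ {ω | i < S ω} := by
  simpa using lintegral_sum_range_eq_tsum_setLIntegral (μ := μ) hS (f := fun _ _ => 1)
    fun _ => aemeasurable_const

theorem integrable_sum_range_of_setIntegral_le [IsFiniteMeasure μ] {S : Ω → ℕ} (hS : Measurable S)
    (hS_int : Integrable (fun ω => (S ω : ℝ)) μ) {f : ℕ → Ω → ℝ} (hf_nonneg : ∀ i ω, 0 ≤ f i ω)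
    (hf_meas : ∀ i, Measurable (f i)) (hf_int : ∀ i, Integrable (f i) μ) {c : ℝ}
    (hc : ∀ i, ∫ ω in {ω | i < S ω}, f i ω ∂μ ≤ c * μ.real {ω | i < S ω}) :
    Integrable (fun ω => ∑ i ∈ range (S ω), f i ω) μ := by
  have hmeas : Measurable fun ω => ∑ i ∈ range (S ω), f i ω := by
    have hF : Measurable fun p : Ω × ℕ => ∑ i ∈ range p.2, f i p.1 :=
      measurable_from_prod_countable_left fun n =>
        (Finset.measurable_fun_sum (range n) fun i _ => hf_meas i :)
    exact hF.comp (measurable_id.prodMk hS)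
  refine ⟨hmeas.aestronglyMeasurable, ?_⟩
  have hterm : ∀ i, ∫⁻ ω in {ω | i < S ω}, ENNReal.ofReal (f i ω) ∂μ
      ≤ ENNReal.ofReal c * μ {ω | i < S ω} := by
    intro i
    rw [← ofReal_integral_eq_lintegral_ofReal (hf_int i).integrableOn
      (ae_of_all _ (hf_nonneg i)), ← ofReal_measureReal, ← ENNReal.ofReal_mul' measureReal_nonneg]
    exact ENNReal.ofReal_le_ofReal (hc i)
  calc ∫⁻ ω, ‖∑ i ∈ range (S ω), f i ω‖ₑ ∂μ
      = ∫⁻ ω, ∑ i ∈ range (S ω), ENNReal.ofReal (f i ω) ∂μ := by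
        congr 1 with ω
        rw [Real.enorm_of_nonneg (sum_nonneg fun i _ => hf_nonneg i ω),
          ENNReal.ofReal_sum_of_nonneg fun i _ => hf_nonneg i ω]
    _ = ∑' i, ∫⁻ ω in {ω | i < S ω}, ENNReal.ofReal (f i ω) ∂μ :=
        lintegral_sum_range_eq_tsum_setLIntegral hS fun i => (hf_meas i).ennreal_ofReal.aemeasurable
    _ ≤ ∑' i, ENNReal.ofReal c * μ {ω | i < S ω} := ENNReal.tsum_le_tsum hterm
    _ = ENNReal.ofReal c * ∫⁻ ω, (S ω : ℝ≥0∞) ∂μ := by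
        rw [ENNReal.tsum_mul_left, lintegral_natCast_eq_tsum_measure_lt hS]
    _ < ∞ := ENNReal.mul_lt_top ENNReal.ofReal_lt_top (by simpa using hS_int.lintegral_lt_top)

theorem setIntegral_le_of_condExp_mul_indicator_le {m : MeasurableSpace Ω} (hm : m ≤ m0)
    [IsFiniteMeasure μ] {f : Ω → ℝ} (hf : Integrable f μ) {s : Set Ω} (hs : MeasurableSet[m] s)
    {c : ℝ} (hc : ∀ᵐ ω ∂μ, μ[f|m] ω * s.indicator (fun _ => (1 : ℝ)) ω ≤ c) :
    ∫ ω in s, f ω ∂μ ≤ c * μ.real s := by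
  rw [← setIntegral_condExp hm hf hs, mul_comm, ← smul_eq_mul, ← setIntegral_const]
  refine setIntegral_mono_ae_restrict integrable_condExp.integrableOn integrableOn_const ?_
  filter_upwards [ae_restrict_of_ae hc, ae_restrict_mem (hm s hs)] with ω hω hmem
  simpa [indicator_of_mem hmem] using hω

theorem ae_le_condExp_of_forall_setIntegral_le {m : MeasurableSpace Ω} (hm : m ≤ m0)
    [SigmaFinite (μ.trim hm)] {f g : Ω → ℝ} (hf : StronglyMeasurable[m] f) (hf_int : Integrable f μ)
    (hg_int : Integrable g μ)
    (hfg : ∀ s, MeasurableSet[m] s → ∫ ω in s, f ω ∂μ ≤ ∫ ω in s, g ω ∂μ) :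
    f ≤ᵐ[μ] μ[g|m] := by
  refine ae_le_of_ae_le_trim (hm := hm) <| ae_le_of_forall_setIntegral_le
    (hf_int.trim hm hf) (integrable_condExp.trim hm stronglyMeasurable_condExp) fun s hs _ => ?_
  rw [← setIntegral_trim hm hf hs, ← setIntegral_trim hm stronglyMeasurable_condExp hs,
    setIntegral_condExp hm hg_int hs]
  exact hfg s hs

theorem ae_le_condExp_of_tendsto {m : MeasurableSpace Ω} (hm : m ≤ m0) [SigmaFinite (μ.trim hm)]
    {f h bound : Ω → ℝ} {g : ℕ → Ω → ℝ} (hf : StronglyMeasurable[m] f) (hf_int : Integrable f μ)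
    (hg_int : ∀ n, Integrable (g n) μ) (hbound : Integrable bound μ)
    (hg_bound : ∀ n, ∀ᵐ ω ∂μ, ‖g n ω‖ ≤ bound ω)
    (hg_lim : ∀ᵐ ω ∂μ, Tendsto (fun n => g n ω) atTop (𝓝 (h ω)))
    (hfg : ∀ n, f ≤ᵐ[μ] μ[g n|m]) :
    f ≤ᵐ[μ] μ[h|m] := by
  have h_int : Integrable h μ := by
    refine hbound.mono' (aestronglyMeasurable_of_tendsto_ae atTop (fun n => (hg_int n).1) hg_lim) ?_
    filter_upwards [hg_lim, ae_all_iff.2 hg_bound] with ω hlim hle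
    exact le_of_tendsto' hlim.norm hle
  refine ae_le_condExp_of_forall_setIntegral_le hm hf hf_int h_int fun s hs => ?_
  refine ge_of_tendsto' (tendsto_integral_of_dominated_convergence bound
    (fun n => (hg_int n).1.restrict) hbound.restrict (fun n => ae_restrict_of_ae (hg_bound n))
    (ae_restrict_of_ae hg_lim)) fun n => ?_
  calc ∫ ω in s, f ω ∂μ ≤ ∫ ω in s, μ[g n|m] ω ∂μ :=
        setIntegral_mono_ae_restrict hf_int.integrableOn integrable_condExp.integrableOn
          (ae_restrict_of_ae (hfg n))
    _ = ∫ ω in s, g n ω ∂μ := setIntegral_condExp hm (hg_int n) hs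

theorem stoppedProcess_natCast {β : Type*} (u : ℕ → Ω → β) (S : Ω → ℕ) (n : ℕ) :
    stoppedProcess u (fun ω => (S ω : WithTop ℕ)) n = fun ω => u (min n (S ω)) ω := by
  ext ω
  rcases le_total n (S ω) with h | h
  · rw [stoppedProcess_eq_of_le (Nat.cast_le.2 h), min_eq_left h]
  · rw [stoppedProcess_eq_of_ge (Nat.cast_le.2 h), min_eq_right h]; rfl

theorem MeasureTheory.IsStoppingTime.measurable_of_coe {ℱ : Filtration ℕ m0} {S : Ω → ℕ}
    (hS : IsStoppingTime ℱ fun ω => (S ω : WithTop ℕ)) :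
    Measurable S := by
  refine measurable_to_countable' fun n => ?_
  convert hS.measurable' (measurableSet_singleton (n : WithTop ℕ)) using 1
  ext ω; simp

theorem MeasureTheory.IsStoppingTime.measurableSet_gt_of_coe {ℱ : Filtration ℕ m0} {S : Ω → ℕ}
    (hS : IsStoppingTime ℱ fun ω => (S ω : WithTop ℕ)) (i : ℕ) :
    MeasurableSet[ℱ i] {ω | i < S ω} := by
  convert (hS i).compl using 1
  ext ω; simp

end

/-- Optional stopping for submartingales with uniformly bounded expected one-step
differences before the stopping time: `E[X_S | F_0] ≥ X_0`. -/
theorem optional_stopping_submartingale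
    {Ω : Type*} {m0 : MeasurableSpace Ω} (μ : Measure Ω) [IsProbabilityMeasure μ]
    (ℱ : Filtration ℕ m0) (X : ℕ → Ω → ℝ) (S : Ω → ℕ)
    (hS : IsStoppingTime ℱ (fun ω => (S ω : WithTop ℕ)))
    (hSint : Integrable (fun ω => (S ω : ℝ)) μ)
    (hsub : Submartingale X ℱ μ)
    (c : ℝ)
    (hbdd : ∀ i : ℕ, ∀ᵐ ω ∂μ,
      (μ[fun ω' => |X i ω' - X (i + 1) ω'| | ℱ i]) ω *
          Set.indicator {ω' | i < S ω'} (fun _ => (1 : ℝ)) ω ≤ c) :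
    X 0 ≤ᵐ[μ] (μ[fun ω => X (S ω) ω | ℱ 0]) := by
  have hX_meas : ∀ i, Measurable (X i) := fun i =>
    ((hsub.stronglyAdapted i).mono (ℱ.le i)).measurable
  have hdiff_int : ∀ i, Integrable (fun ω => |X i ω - X (i + 1) ω|) μ := fun i =>
    ((hsub.integrable i).sub (hsub.integrable (i + 1))).abs
  have hincr_int : Integrable (fun ω => ∑ i ∈ range (S ω), |X i ω - X (i + 1) ω|) μ :=
    integrable_sum_range_of_setIntegral_le hS.measurable_of_coe hSint (fun i ω => abs_nonneg _)
      (fun i => ((hX_meas i).sub (hX_meas (i + 1))).abs) hdiff_int fun i =>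
      setIntegral_le_of_condExp_mul_indicator_le (ℱ.le i) (hdiff_int i)
        (hS.measurableSet_gt_of_coe i) (hbdd i)
  have hstopped := hsub.stoppedProcess hS
  refine ae_le_condExp_of_tendsto (ℱ.le 0) (hsub.stronglyAdapted 0) (hsub.integrable 0)
    hstopped.integrable ((hsub.integrable 0).abs.add hincr_int) (fun n => ae_of_all _ fun ω => ?_)
    (ae_of_all _ fun ω => ?_) fun n => ?_
  · simpa [stoppedProcess_natCast, Real.norm_eq_abs] using
      norm_le_norm_zero_add_sum_range_norm_sub (fun i => X i ω) (min_le_right n (S ω))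
  · exact tendsto_atTop_of_eventually_const (i₀ := S ω) fun n hn => by
      simp only [stoppedProcess_natCast, min_eq_right hn]
  · simpa [stoppedProcess_natCast] using hstopped.ae_le_condExp (Nat.zero_le n)
end

section
/- Let n ∈ ℕ be even and positive, let r ∈ {1, …, n/2}, set b = 2(r−1), a = 3r(n−b)(n+b)/(3r(n−b) − 2n), and λ = a/(n−b), assuming 3r(n−b) − 2n > 0. Then for every integer m with n/2 + 1 ≤ m ≤ n/2 + r − 1, it holds that (1/λ)·(m/n) + λ·((n−m)/n) ≥ 1 + (λ − 1)/(3r). -/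
/-!
Multiplying by `c λ n`, the difference of the two sides becomes a linear function of `m` with
slope `c (1 - λ²) ≤ 0`, so it suffices to check the largest admissible `m = (n + b) / 2`. There it
equals `(1 - λ) (c (n + b) - λ (c (n - b) - 2 n))`, which vanishes because `λ` is the fixed point
`λ (c (n - b) - 2 n) = c (n + b)` defining it (with `c = 3 r`).
-/

lemma one_le_of_mul_sub_eq {n b c lam : ℝ} (hn : 0 ≤ n) (hb : 0 ≤ b) (hc : 0 ≤ c)
    (hden : 0 < c * (n - b) - 2 * n) (hfix : lam * (c * (n - b) - 2 * n) = c * (n + b)) :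
    1 ≤ lam := by
  refine le_of_mul_le_mul_right ?_ hden
  rw [hfix]
  nlinarith

lemma le_drift_of_two_mul_le {n b c lam x : ℝ} (hn : 0 < n) (hc : 0 < c) (hlam : 1 ≤ lam)
    (hfix : lam * (c * (n - b) - 2 * n) = c * (n + b)) (hx : 2 * x ≤ n + b) :
    1 + (lam - 1) / c ≤ 1 / lam * (x / n) + lam * ((n - x) / n) := by
  have hlam0 : 0 < lam := by linarith
  have key : 2 * (c * x + c * lam ^ 2 * (n - x) - c * lam * n - lam ^ 2 * n + lam * n)
      = c * (lam ^ 2 - 1) * (n + b - 2 * x)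
        + (1 - lam) * (c * (n + b) - lam * (c * (n - b) - 2 * n)) := by ring
  have hslope : 0 ≤ c * (lam ^ 2 - 1) * (n + b - 2 * x) := by
    have : 0 ≤ lam ^ 2 - 1 := by nlinarith
    have : 0 ≤ n + b - 2 * x := by linarith
    positivity
  rw [hfix, sub_self, mul_zero, add_zero] at key
  rw [← sub_nonneg]
  have expand : 1 / lam * (x / n) + lam * ((n - x) / n) - (1 + (lam - 1) / c)
      = (c * x + c * lam ^ 2 * (n - x) - c * lam * n - lam ^ 2 * n + lam * n)
        / (c * lam * n) := by
    field_simp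
    ring
  rw [expand]
  apply div_nonneg _ (by positivity)
  linarith

lemma two_mul_le_add_of_le_half_add {n r m : ℕ} (heven : Even n) (hr : 1 ≤ r)
    (hm : m ≤ n / 2 + r - 1) : 2 * (m : ℝ) ≤ n + 2 * ((r : ℝ) - 1) := by
  obtain ⟨k, rfl⟩ := heven
  have : m + 1 ≤ k + r := by omega
  have : (m : ℝ) + 1 ≤ k + r := by exact_mod_cast this
  push_cast
  linarith

theorem key_drift_inequality_general
    (n r : ℕ) (hn : 0 < n) (heven : Even n) (hr1 : 1 ≤ r)
    (b a lam : ℝ)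
    (hb : b = 2 * ((r : ℝ) - 1))
    (hden : 0 < 3 * (r : ℝ) * ((n : ℝ) - b) - 2 * n)
    (ha : a = 3 * (r : ℝ) * ((n : ℝ) - b) * ((n : ℝ) + b) /
      (3 * (r : ℝ) * ((n : ℝ) - b) - 2 * n))
    (hlam : lam = a / ((n : ℝ) - b)) :
    ∀ m : ℕ, n / 2 + 1 ≤ m → m ≤ n / 2 + r - 1 →
      1 + (lam - 1) / (3 * (r : ℝ)) ≤
        (1 / lam) * ((m : ℝ) / n) + lam * (((n : ℝ) - m) / n) := by
  intro m _ hm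
  have hr : (1 : ℝ) ≤ r := by exact_mod_cast hr1
  have hN : (0 : ℝ) < n := by exact_mod_cast hn
  have hb0 : 0 ≤ b := by rw [hb]; linarith
  have hNb : (n : ℝ) - b ≠ 0 := by
    intro h
    rw [h] at hden
    linarith
  have hfix : lam * (3 * (r : ℝ) * ((n : ℝ) - b) - 2 * n) = 3 * (r : ℝ) * ((n : ℝ) + b) := by
    rw [hlam, ha, div_div, div_mul_eq_mul_div, div_eq_iff (mul_ne_zero hden.ne' hNb)]
    ring
  have hlam1 := one_le_of_mul_sub_eq hN.le hb0 (by positivity) hden hfix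
  exact le_drift_of_two_mul_le hN (by positivity) hlam1 hfix (hb ▸ two_mul_le_add_of_le_half_add heven hr1 hm)

/-- Key drift inequality in the analysis of RLS on HasMajority. -/
theorem key_drift_inequality
    (n r : ℕ) (hn : 0 < n) (heven : Even n) (hr1 : 1 ≤ r) (hr2 : r ≤ n / 2)
    (b a lam : ℝ)
    (hb : b = 2 * ((r : ℝ) - 1))
    (hden : 0 < 3 * (r : ℝ) * ((n : ℝ) - b) - 2 * n)
    (ha : a = 3 * (r : ℝ) * ((n : ℝ) - b) * ((n : ℝ) + b) /
      (3 * (r : ℝ) * ((n : ℝ) - b) - 2 * n))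
    (hlam : lam = a / ((n : ℝ) - b)) :
    ∀ m : ℕ, n / 2 + 1 ≤ m → m ≤ n / 2 + r - 1 →
      1 + (lam - 1) / (3 * (r : ℝ)) ≤
        (1 / lam) * ((m : ℝ) / n) + lam * (((n : ℝ) - m) / n) :=
  key_drift_inequality_general n r hn heven hr1 b a lam hb hden ha hlam
end

section
/- Consider the Markov chain (M_t) on {n/2, n/2+1, …, n} (n even and positive) defined as follows: if M_t = n/2 then M_{t+1} = n/2 + 1 with probability 1; if M_t > n/2 then M_{t+1} = M_t + 1 with probability (n − M_t)/n and M_{t+1} = M_t − 1 with probability M_t/n. For r ∈ {1, …, n/2} with 3r(n − 2(r−1)) − 2n > 0, let λ = 3r(n + 2(r−1))/(3r(n − 2(r−1)) − 2n), and let T = inf{t : M_t ≥ n/2 + r}. Then for any starting value m_0, E[T] ≤ 3r·h(m_0)/(λ − 1), where h(m) = λ^r − λ^{m − n/2} for m < n/2 + r and h(m) = 0 otherwise. -/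
open MeasureTheory Filter Set ENNReal

lemma lam_gt_one (n r : ℕ) (hn : 0 < n) (hr1 : 1 ≤ r)
    (hden : 0 < 3 * (r : ℝ) * ((n : ℝ) - 2 * ((r : ℝ) - 1)) - 2 * n)
    (lam : ℝ)
    (hlam : lam = 3 * (r : ℝ) * ((n : ℝ) + 2 * ((r : ℝ) - 1)) /
      (3 * (r : ℝ) * ((n : ℝ) - 2 * ((r : ℝ) - 1)) - 2 * n)) : 1 < lam := by
  have h1 : (1:ℝ) ≤ r := by exact_mod_cast hr1
  have h2 : (1:ℝ) ≤ n := by exact_mod_cast hn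
  rw [hlam, lt_div_iff₀ hden]
  nlinarith [mul_nonneg (sub_nonneg.2 h1) (sub_nonneg.2 h1)]

lemma key_ineq (nn r m : ℕ) (hr1 : 1 ≤ r) (hrnn : r ≤ nn)
    (hden : 0 < 3 * (r : ℝ) * ((2*(nn:ℝ)) - 2 * ((r : ℝ) - 1)) - 2 * (2*(nn:ℝ)))
    (lam : ℝ)
    (hlam : lam = 3 * (r : ℝ) * ((2*(nn:ℝ)) + 2 * ((r : ℝ) - 1)) /
      (3 * (r : ℝ) * ((2*(nn:ℝ)) - 2 * ((r : ℝ) - 1)) - 2 * (2*(nn:ℝ))))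
    (hm1 : nn < m) (hm2 : m + 1 ≤ nn + r) :
    1 + 1/(3*(r:ℝ)) ≤ ((2*(nn:ℝ) - m)/(2*(nn:ℝ))) * (lam + 1) := by
  have hr : (1:ℝ) ≤ r := by exact_mod_cast hr1
  have hrn : (r:ℝ) ≤ nn := by exact_mod_cast hrnn
  have hnn : (1:ℝ) ≤ nn := le_trans hr hrn
  have hm2' : (m:ℝ) + 1 ≤ nn + r := by exact_mod_cast hm2
  have hnn0 : (0:ℝ) < 2*(nn:ℝ) := by linarith
  rw [hlam]
  have h3r : (0:ℝ) < 3*(r:ℝ) := by linarith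
  rw [div_add' _ _ _ (ne_of_gt hden), div_mul_div_comm,
    show (1:ℝ) + 1/(3*(r:ℝ)) = (3*(r:ℝ)+1)/(3*(r:ℝ)) from by field_simp,
    div_le_div_iff₀ h3r (by positivity)]
  have hA : (nn:ℝ) - r + 1 ≤ 2*nn - m := by linarith
  have h6r : (0:ℝ) ≤ 6*(r:ℝ)*(3*(r:ℝ)-1) := by nlinarith
  have step1 : 6*(r:ℝ)*(3*(r:ℝ)-1)*((nn:ℝ)-r+1) ≤ 6*(r:ℝ)*(3*(r:ℝ)-1)*(2*(nn:ℝ)-m) :=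
    mul_le_mul_of_nonneg_left hA h6r
  have hrA : (r:ℝ)*((nn:ℝ)-r+1) ≤ (r:ℝ)*nn :=
    mul_le_mul_of_nonneg_left (by linarith) (by linarith)
  have step2 : (3*(r:ℝ)+1)*(3 * (r:ℝ) * ((2*(nn:ℝ)) - 2 * ((r : ℝ) - 1)) - 2 * (2*(nn:ℝ)))
      ≤ 6*(r:ℝ)*(3*(r:ℝ)-1)*((nn:ℝ)-r+1) := by nlinarith [hrA]
  have final := mul_le_mul_of_nonneg_left (step2.trans step1) (le_of_lt hnn0)
  nlinarith [final]

lemma drift_core (lam p c : ℝ) (hlam : 1 ≤ lam) (hc : 0 ≤ c)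
    (hkey : c ≤ (lam - 1) * (p * (lam + 1) - 1)) (j : ℕ) :
    lam ^ (j + 1) + c ≤ p * lam ^ (j + 2) + (1 - p) * lam ^ j := by
  have h1 : (1:ℝ) ≤ lam ^ j := one_le_pow₀ hlam
  have key0 : 0 ≤ (lam - 1) * (p * (lam + 1) - 1) := hc.trans hkey
  have h2 : (1:ℝ) * ((lam - 1) * (p * (lam + 1) - 1))
      ≤ lam ^ j * ((lam - 1) * (p * (lam + 1) - 1)) :=
    mul_le_mul_of_nonneg_right h1 key0
  have h3 : p * lam ^ (j + 2) + (1 - p) * lam ^ j - lam ^ (j + 1)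
      = lam ^ j * ((lam - 1) * (p * (lam + 1) - 1)) := by ring
  linarith

lemma enat_cast_tsum (a : ℕ∞) :
    (a : ℝ≥0∞) = ∑' t : ℕ, if (t : ℕ∞) < a then (1 : ℝ≥0∞) else 0 := by
  induction a using ENat.recTopCoe with
  | top =>
      have h1 : ∀ t : ℕ, (if ((t : ℕ∞) < ⊤) then (1:ℝ≥0∞) else 0) = 1 := fun t =>
        if_pos (lt_of_le_of_ne le_top (ENat.coe_ne_top t))
      simp only [h1, ENat.toENNReal_top]
      exact (ENNReal.tsum_const_eq_top_of_ne_zero one_ne_zero).symm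
  | coe k =>
      have h1 : ∀ t ∉ Finset.range k, (if ((t:ℕ∞) < (k:ℕ∞)) then (1:ℝ≥0∞) else 0) = 0 := by
        intro t ht
        rw [if_neg]
        rw [Finset.mem_range] at ht
        exact_mod_cast ht
      rw [tsum_eq_sum h1]
      have h2 : ∀ t ∈ Finset.range k, (if ((t:ℕ∞) < (k:ℕ∞)) then (1:ℝ≥0∞) else 0) = 1 := by
        intro t ht
        rw [if_pos]
        exact_mod_cast Finset.mem_range.mp ht
      rw [Finset.sum_congr rfl h2]
      simp

/-- Run time bound of RLS on HasMajority_r, phrased as a first-hitting time of the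
Markov chain tracking the majority count. -/
theorem rls_hasMajority_hitting_time
    {Ω : Type*} {m0' : MeasurableSpace Ω} (μ : Measure Ω) [IsProbabilityMeasure μ]
    (ℱ : Filtration ℕ m0') (n r : ℕ) (hn : 0 < n) (heven : Even n)
    (hr1 : 1 ≤ r) (hr2 : r ≤ n / 2)
    (hden : 0 < 3 * (r : ℝ) * ((n : ℝ) - 2 * ((r : ℝ) - 1)) - 2 * n)
    (lam : ℝ)
    (hlam : lam = 3 * (r : ℝ) * ((n : ℝ) + 2 * ((r : ℝ) - 1)) /
      (3 * (r : ℝ) * ((n : ℝ) - 2 * ((r : ℝ) - 1)) - 2 * n))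
    (M : ℕ → Ω → ℕ) (hadapt : Adapted ℱ fun t ω => (M t ω : ℝ))
    (hrange : ∀ t ω, n / 2 ≤ M t ω ∧ M t ω ≤ n)
    (hhalf : ∀ t : ℕ, ∀ᵐ ω ∂μ, M t ω = n / 2 → M (t + 1) ω = n / 2 + 1)
    (hup : ∀ t : ℕ, ∀ᵐ ω ∂μ, n / 2 < M t ω →
      (μ[Set.indicator {ω' | M (t + 1) ω' = M t ω' + 1} (fun _ => (1 : ℝ)) | ℱ t]) ω
        = ((n : ℝ) - M t ω) / n)
    (hdown : ∀ t : ℕ, ∀ᵐ ω ∂μ, n / 2 < M t ω →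
      (μ[Set.indicator {ω' | M (t + 1) ω' = M t ω' - 1} (fun _ => (1 : ℝ)) | ℱ t]) ω
        = (M t ω : ℝ) / n)
    (m₀ : ℕ) (hM0 : ∀ ω, M 0 ω = m₀)
    (T : Ω → ℕ∞)
    (hT : ∀ ω, T ω = sInf ((↑) '' {t : ℕ | n / 2 + r ≤ M t ω}))
    (h : ℕ → ℝ)
    (hh : ∀ m : ℕ, h m = if m < n / 2 + r then lam ^ r - lam ^ (m - n / 2) else 0) :
    ∫⁻ ω, (T ω : ℝ≥0∞) ∂μ ≤ ENNReal.ofReal (3 * (r : ℝ) * h m₀ / (lam - 1)) := by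
  classical
  set nn := n / 2 with hnn_def
  have h2dvd : (2:ℕ) ∣ n := heven.two_dvd
  have hn2 : n = 2 * nn := by omega
  have hnncast : (n : ℝ) = 2 * (nn : ℝ) := by rw [hn2]; push_cast; ring
  have hnn1 : 1 ≤ nn := hr1.trans hr2
  have hlam1 : 1 < lam := lam_gt_one n r hn hr1 hden lam hlam
  have hrpos : (0:ℝ) < r := by exact_mod_cast hr1
  have hr1' : (1:ℝ) ≤ r := by exact_mod_cast hr1
  set c := (lam - 1) / (3 * (r:ℝ)) with hc_def
  have hcpos : 0 < c := div_pos (by linarith) (by linarith)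
  have hnpos : (0:ℝ) < n := by exact_mod_cast hn
  -- values of h
  have hval : ∀ m : ℕ, m ≤ nn + r → h m = lam ^ r - lam ^ (m - nn) := by
    intro m hm
    rcases lt_or_eq_of_le hm with hlt | heq
    · rw [hh m, if_pos hlt]
    · rw [hh m, if_neg (by omega), heq]
      have : nn + r - nn = r := by omega
      rw [this]; ring
  have honele : ∀ e : ℕ, (1:ℝ) ≤ lam ^ e := fun e => one_le_pow₀ hlam1.le
  have hnonneg : ∀ m : ℕ, 0 ≤ h m := by
    intro m
    rw [hh m]; split
    · have hle : lam ^ (m - nn) ≤ lam ^ r := pow_le_pow_right₀ hlam1.le (by omega)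
      linarith
    · exact le_refl _
  have hbound : ∀ m : ℕ, |h m| ≤ lam ^ r := by
    intro m
    rw [abs_le]
    constructor
    · linarith [hnonneg m, honele r]
    · rw [hh m]; split
      · linarith [honele (m - nn)]
      · linarith [honele r]
  -- drift inequalities
  have hstep_half : h (nn + 1) ≤ h nn - c := by
    have e0 : nn + 1 - nn = 1 := by omega
    have e0' : nn - nn = 0 := by omega
    have e1 : h (nn+1) = lam ^ r - lam ^ 1 := by rw [hval (nn+1) (by omega), e0]
    have e2 : h nn = lam ^ r - lam ^ 0 := by rw [hval nn (by omega), e0']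
    have hcle : c ≤ lam - 1 := div_le_self (by linarith) (by linarith)
    rw [e1, e2]; simp only [pow_one, pow_zero]; linarith
  have hstep_mid : ∀ m : ℕ, nn < m → m < nn + r →
      ((n:ℝ) - m) / n * h (m+1) + (m:ℝ) / n * h (m-1) ≤ h m - c := by
    intro m hm1 hm2
    obtain ⟨j, rfl⟩ : ∃ j, m = nn + j + 1 := ⟨m - nn - 1, by omega⟩
    have e1 : h (nn + j + 1 + 1) = lam ^ r - lam ^ (j+2) := by
      rw [hval _ (by omega)]
      have : nn + j + 1 + 1 - nn = j + 2 := by omega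
      rw [this]
    have e2 : h (nn + j + 1 - 1) = lam ^ r - lam ^ j := by
      have hm1' : nn + j + 1 - 1 = nn + j := by omega
      rw [hm1', hval _ (by omega)]
      have : nn + j - nn = j := by omega
      rw [this]
    have e3 : h (nn + j + 1) = lam ^ r - lam ^ (j+1) := by
      rw [hval _ (by omega)]
      have : nn + j + 1 - nn = j + 1 := by omega
      rw [this]
    set p : ℝ := ((n:ℝ) - (nn + j + 1 : ℕ)) / n with hp_def
    have hq : ((nn + j + 1 : ℕ):ℝ)/n = 1 - p := by
      rw [hp_def]; field_simp; ring
    have hkey0 : 1 + 1/(3*(r:ℝ)) ≤ p * (lam + 1) := by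
      have hk := key_ineq nn r (nn + j + 1) hr1 hr2
        (by rw [← hnncast]; exact hden) lam (by rw [← hnncast]; exact hlam) hm1 (by omega)
      have hfold : ((2*(nn:ℝ) - ((nn + j + 1 : ℕ):ℝ))/(2*(nn:ℝ))) = p := by
        rw [hp_def, hnncast]
      rwa [hfold] at hk
    have hkey : c ≤ (lam - 1) * (p * (lam + 1) - 1) := by
      have h1 : 1/(3*(r:ℝ)) ≤ p*(lam+1) - 1 := by linarith
      calc c = (lam-1) * (1/(3*(r:ℝ))) := by rw [hc_def]; ring
        _ ≤ _ := mul_le_mul_of_nonneg_left h1 (by linarith)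
    have hdc := drift_core lam p c hlam1.le hcpos.le hkey j
    rw [e1, e2, e3, hq]
    have expand : p * (lam ^ r - lam ^ (j+2)) + (1-p) * (lam ^ r - lam ^ j)
        = lam ^ r - (p * lam ^ (j+2) + (1-p) * lam ^ j) := by ring
    linarith
  -- measurability
  have hle : ∀ t, ℱ t ≤ m0' := fun t => ℱ.le t
  have hMmeas : ∀ t, Measurable[ℱ t] (M t) := by
    intro t
    refine @measurable_to_countable' ℕ Ω _ _ (ℱ t) (M t) (fun k => ?_)
    have hpre : (M t) ⁻¹' {k} = (fun ω => (M t ω : ℝ)) ⁻¹' {(k:ℝ)} := by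
      ext ω; simp [Nat.cast_inj]
    rw [hpre]
    exact (hadapt t) (measurableSet_singleton _)
  have hMmeas0 : ∀ t, Measurable (M t) := fun t => (hMmeas t).mono (hle t) le_rfl
  have hcomp : ∀ (t : ℕ) (g : ℕ → ℝ), Measurable[ℱ t] (fun ω => g (M t ω)) :=
    fun t g => (measurable_from_top (f := g)).comp (hMmeas t)
  set G : ℕ → Set Ω := fun t => {ω | ∀ s, s ≤ t → M s ω < nn + r} with hG_def
  have hGmeasF : ∀ t, MeasurableSet[ℱ t] (G t) := by
    intro t
    have hGeq : G t = ⋂ (s : ℕ) (_ : s ≤ t), {ω | M s ω < nn + r} := by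
      ext ω; simp [hG_def]
    rw [hGeq]
    refine MeasurableSet.iInter fun s => MeasurableSet.iInter fun hs => ?_
    have hms : MeasurableSet[ℱ s] (M s ⁻¹' {k | k < nn + r}) := (hMmeas s) trivial
    exact (ℱ.mono hs) _ hms
  have hGmeas : ∀ t, MeasurableSet (G t) := fun t => hle t _ (hGmeasF t)
  have hGmono : ∀ t, G (t+1) ⊆ G t := fun t ω hω s hs => hω s (hs.trans (Nat.le_succ t))
  have hintb : ∀ (f : Ω → ℝ) (C : ℝ), Measurable f → (∀ ω, |f ω| ≤ C) → Integrable f μ := by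
    intro f C hm hb
    exact ⟨hm.aestronglyMeasurable,
      HasFiniteIntegral.of_bounded (C := C) (ae_of_all _ (fun ω => by
        simpa [Real.norm_eq_abs] using hb ω))⟩
  have hint_hM : ∀ t, Integrable (fun ω => h (M t ω)) μ :=
    fun t => hintb _ (lam ^ r) ((hcomp t h).mono (hle t) le_rfl) (fun ω => hbound _)
  -- main one-step estimate
  have hmain : ∀ t : ℕ,
      ∫ ω in G (t+1), h (M (t+1) ω) ∂μ + c * (μ (G t)).toReal
        ≤ ∫ ω in G t, h (M t ω) ∂μ := by
    intro t
    set S : Set Ω := {ω | nn < M t ω} with hS_def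
    have hSmeasF : MeasurableSet[ℱ t] S := by
      have : MeasurableSet[ℱ t] (M t ⁻¹' {k | nn < k}) := (hMmeas t) trivial
      exact this
    have hSmeas : MeasurableSet S := hle t _ hSmeasF
    set U : Set Ω := {ω' | M (t + 1) ω' = M t ω' + 1} with hU_def
    set D : Set Ω := {ω' | M (t + 1) ω' = M t ω' - 1} with hD_def
    have hUmeas : MeasurableSet U := by
      have hU2 : U = ⋃ k : ℕ, ((M t) ⁻¹' {k} ∩ (M (t+1)) ⁻¹' {k + 1}) := by
        ext ω
        simp only [hU_def, Set.mem_setOf_eq, Set.mem_iUnion, Set.mem_inter_iff,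
          Set.mem_preimage, Set.mem_singleton_iff]
        constructor
        · intro h1; exact ⟨M t ω, rfl, h1⟩
        · rintro ⟨k, rfl, h2⟩; exact h2
      rw [hU2]
      exact MeasurableSet.iUnion fun k =>
        ((hMmeas0 t) (measurableSet_singleton k)).inter
          ((hMmeas0 (t+1)) (measurableSet_singleton _))
    have hDmeas : MeasurableSet D := by
      have hD2 : D = ⋃ k : ℕ, ((M t) ⁻¹' {k} ∩ (M (t+1)) ⁻¹' {k - 1}) := by
        ext ω
        simp only [hD_def, Set.mem_setOf_eq, Set.mem_iUnion, Set.mem_inter_iff,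
          Set.mem_preimage, Set.mem_singleton_iff]
        constructor
        · intro h1; exact ⟨M t ω, rfl, h1⟩
        · rintro ⟨k, rfl, h2⟩; exact h2
      rw [hD2]
      exact MeasurableSet.iUnion fun k =>
        ((hMmeas0 t) (measurableSet_singleton k)).inter
          ((hMmeas0 (t+1)) (measurableSet_singleton _))
    have honeU_int : Integrable (U.indicator (fun _ => (1:ℝ))) μ :=
      (integrable_const (1:ℝ)).indicator hUmeas
    have honeD_int : Integrable (D.indicator (fun _ => (1:ℝ))) μ :=
      (integrable_const (1:ℝ)).indicator hDmeas
    have hdisj : ∀ ω, ω ∈ U → ω ∈ D → False := by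
      intro ω hU' hD'
      have h1 : M (t+1) ω = M t ω + 1 := hU'
      have h2 : M (t+1) ω = M t ω - 1 := hD'
      omega
    -- the transition probabilities
    have hp_int : Integrable (fun ω => ((n:ℝ) - M t ω)/n) μ := by
      refine hintb _ 1 (((hcomp t (fun k => ((n:ℝ) - k)/n)).mono (hle t) le_rfl)) (fun ω => ?_)
      have h1 := (hrange t ω).2
      have h1' : (M t ω : ℝ) ≤ n := by exact_mod_cast h1
      have h2 : (0:ℝ) ≤ M t ω := Nat.cast_nonneg _
      rw [abs_le]
      constructor
      · have h3 : (0:ℝ) ≤ ((n:ℝ) - M t ω)/n := div_nonneg (by linarith) hnpos.le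
        linarith
      · rw [div_le_one hnpos]
        linarith
    have hq_int : Integrable (fun ω => (M t ω : ℝ)/n) μ := by
      refine hintb _ 1 (((hcomp t (fun k => (k:ℝ)/n)).mono (hle t) le_rfl)) (fun ω => ?_)
      have h1 := (hrange t ω).2
      have h1' : (M t ω : ℝ) ≤ n := by exact_mod_cast h1
      have h2 : (0:ℝ) ≤ M t ω := Nat.cast_nonneg _
      rw [abs_le]
      constructor
      · nlinarith [div_nonneg h2 hnpos.le]
      · rw [div_le_one hnpos]; linarith
    -- (K1) a.e. on S, one of the two transitions happens
    have hK1 : ∀ᵐ ω ∂μ, ω ∈ S →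
        U.indicator (fun _ => (1:ℝ)) ω + D.indicator (fun _ => (1:ℝ)) ω = 1 := by
      have hf_int : Integrable (S.indicator (fun ω =>
          U.indicator (fun _ => (1:ℝ)) ω + D.indicator (fun _ => (1:ℝ)) ω)) μ :=
        (honeU_int.add honeD_int).indicator hSmeas
      have hg_int : Integrable (S.indicator (fun _ => (1:ℝ))) μ :=
        (integrable_const (1:ℝ)).indicator hSmeas
      have hfg : (S.indicator (fun ω =>
          U.indicator (fun _ => (1:ℝ)) ω + D.indicator (fun _ => (1:ℝ)) ω))
          ≤ᵐ[μ] S.indicator (fun _ => (1:ℝ)) := by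
        refine ae_of_all _ fun ω => ?_
        by_cases hω : ω ∈ S
        · rw [Set.indicator_of_mem hω, Set.indicator_of_mem hω]
          by_cases hU' : ω ∈ U
          · have hD' : ω ∉ D := fun hD' => hdisj ω hU' hD'
            simp [Set.indicator_of_mem hU', Set.indicator_of_notMem hD']
          · by_cases hD' : ω ∈ D
            · simp [Set.indicator_of_notMem hU', Set.indicator_of_mem hD']
            · simp [Set.indicator_of_notMem hU', Set.indicator_of_notMem hD']
        · rw [Set.indicator_of_notMem hω, Set.indicator_of_notMem hω]
      have hU_eq : ∫ ω in S, U.indicator (fun _ => (1:ℝ)) ω ∂μ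
          = ∫ ω in S, ((n:ℝ) - M t ω)/n ∂μ := by
        rw [← setIntegral_condExp (hle t) honeU_int hSmeasF]
        refine setIntegral_congr_ae hSmeas ?_
        filter_upwards [hup t] with ω hω hωS
        exact hω hωS
      have hD_eq : ∫ ω in S, D.indicator (fun _ => (1:ℝ)) ω ∂μ
          = ∫ ω in S, (M t ω : ℝ)/n ∂μ := by
        rw [← setIntegral_condExp (hle t) honeD_int hSmeasF]
        refine setIntegral_congr_ae hSmeas ?_
        filter_upwards [hdown t] with ω hω hωS
        exact hω hωS
      have heq : ∫ ω, S.indicator (fun ω =>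
          U.indicator (fun _ => (1:ℝ)) ω + D.indicator (fun _ => (1:ℝ)) ω) ω ∂μ
          = ∫ ω, S.indicator (fun _ => (1:ℝ)) ω ∂μ := by
        rw [integral_indicator hSmeas, integral_indicator hSmeas,
          integral_add honeU_int.integrableOn honeD_int.integrableOn, hU_eq, hD_eq,
          ← integral_add hp_int.integrableOn hq_int.integrableOn]
        refine setIntegral_congr_ae hSmeas (ae_of_all _ fun ω _ => ?_)
        field_simp; ring
      have hae := (integral_eq_iff_of_ae_le hf_int hg_int hfg).mp heq
      filter_upwards [hae] with ω hω hωS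
      rw [Set.indicator_of_mem hωS, Set.indicator_of_mem hωS] at hω
      exact hω
    -- functions of M t
    set aF : Ω → ℝ := fun ω => h (M t ω + 1) with haF_def
    set bF : Ω → ℝ := fun ω => h (M t ω - 1) with hbF_def
    have haF_meas : StronglyMeasurable[ℱ t] aF :=
      (hcomp t (fun k => h (k+1))).stronglyMeasurable
    have hbF_meas : StronglyMeasurable[ℱ t] bF :=
      (hcomp t (fun k => h (k-1))).stronglyMeasurable
    have haF_int : Integrable aF μ :=
      hintb _ (lam ^ r) ((hcomp t (fun k => h (k+1))).mono (hle t) le_rfl) (fun ω => hbound _)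
    have hbF_int : Integrable bF μ :=
      hintb _ (lam ^ r) ((hcomp t (fun k => h (k-1))).mono (hle t) le_rfl) (fun ω => hbound _)
    have hprod1_int : Integrable (aF * U.indicator (fun _ => (1:ℝ))) μ := by
      refine hintb _ (lam ^ r) ?_ (fun ω => ?_)
      · exact (((hcomp t (fun k => h (k+1))).mono (hle t) le_rfl)).mul
          (measurable_const.indicator hUmeas)
      · have h1 : |aF ω| ≤ lam ^ r := hbound _
        have h2 : |U.indicator (fun _ => (1:ℝ)) ω| ≤ 1 := by
          by_cases hU' : ω ∈ U
          · simp [Set.indicator_of_mem hU']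
          · simp [Set.indicator_of_notMem hU']
        calc |(aF * U.indicator (fun _ => (1:ℝ))) ω| = |aF ω| * |U.indicator (fun _ => (1:ℝ)) ω| :=
              abs_mul _ _
          _ ≤ lam ^ r * 1 := mul_le_mul h1 h2 (abs_nonneg _) (le_trans (abs_nonneg _) h1)
          _ = lam ^ r := mul_one _
    have hprod2_int : Integrable (bF * D.indicator (fun _ => (1:ℝ))) μ := by
      refine hintb _ (lam ^ r) ?_ (fun ω => ?_)
      · exact (((hcomp t (fun k => h (k-1))).mono (hle t) le_rfl)).mul
          (measurable_const.indicator hDmeas)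
      · have h1 : |bF ω| ≤ lam ^ r := hbound _
        have h2 : |D.indicator (fun _ => (1:ℝ)) ω| ≤ 1 := by
          by_cases hD' : ω ∈ D
          · simp [Set.indicator_of_mem hD']
          · simp [Set.indicator_of_notMem hD']
        calc |(bF * D.indicator (fun _ => (1:ℝ))) ω| = |bF ω| * |D.indicator (fun _ => (1:ℝ)) ω| :=
              abs_mul _ _
          _ ≤ lam ^ r * 1 := mul_le_mul h1 h2 (abs_nonneg _) (le_trans (abs_nonneg _) h1)
          _ = lam ^ r := mul_one _
    -- a.e. representation of h (M (t+1) ω) on S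
    have hrep : ∀ᵐ ω ∂μ, ω ∈ S → h (M (t+1) ω)
        = (aF * U.indicator (fun _ => (1:ℝ))) ω + (bF * D.indicator (fun _ => (1:ℝ))) ω := by
      filter_upwards [hK1] with ω h1 hωS
      have h1' := h1 hωS
      by_cases hU' : ω ∈ U
      · have hD' : ω ∉ D := fun hD' => hdisj ω hU' hD'
        have hMs : M (t+1) ω = M t ω + 1 := hU'
        simp only [Pi.mul_apply, Set.indicator_of_mem hU', Set.indicator_of_notMem hD',
          mul_one, mul_zero, add_zero, hMs, haF_def]
      · by_cases hD' : ω ∈ D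
        · have hMs : M (t+1) ω = M t ω - 1 := hD'
          simp only [Pi.mul_apply, Set.indicator_of_mem hD', Set.indicator_of_notMem hU',
            mul_one, mul_zero, zero_add, hMs, hbF_def]
        · exfalso
          rw [Set.indicator_of_notMem hU', Set.indicator_of_notMem hD'] at h1'
          norm_num at h1'
    -- conditional expectation computation
    have hcond : μ[aF * U.indicator (fun _ => (1:ℝ)) + bF * D.indicator (fun _ => (1:ℝ)) | ℱ t]
        =ᵐ[μ] aF * μ[U.indicator (fun _ => (1:ℝ)) | ℱ t]
          + bF * μ[D.indicator (fun _ => (1:ℝ)) | ℱ t] := by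
      refine (condExp_add hprod1_int hprod2_int _).trans ?_
      exact EventuallyEq.add
        (condExp_mul_of_stronglyMeasurable_left haF_meas hprod1_int honeU_int)
        (condExp_mul_of_stronglyMeasurable_left hbF_meas hprod2_int honeD_int)
    have hGS : MeasurableSet[ℱ t] (G t ∩ S) := (hGmeasF t).inter hSmeasF
    have hGSm : MeasurableSet (G t ∩ S) := hle t _ hGS
    have hMt1_int : Integrable (fun ω => h (M (t+1) ω)) μ := hint_hM (t+1)
    have hsub_int : Integrable (fun ω => h (M t ω) - c) μ :=
      (hint_hM t).sub (integrable_const c)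
    -- bound on G t ∩ S
    have hIS : ∫ ω in G t ∩ S, h (M (t+1) ω) ∂μ ≤ ∫ ω in G t ∩ S, (h (M t ω) - c) ∂μ := by
      have e1 : ∫ ω in G t ∩ S, h (M (t+1) ω) ∂μ
          = ∫ ω in G t ∩ S, ((aF * U.indicator (fun _ => (1:ℝ)))
            + (bF * D.indicator (fun _ => (1:ℝ)))) ω ∂μ := by
        refine setIntegral_congr_ae hGSm ?_
        filter_upwards [hrep] with ω h1 h2
        exact h1 h2.2
      have e2 : ∫ ω in G t ∩ S, ((aF * U.indicator (fun _ => (1:ℝ)))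
            + (bF * D.indicator (fun _ => (1:ℝ)))) ω ∂μ
          = ∫ ω in G t ∩ S,
            (μ[aF * U.indicator (fun _ => (1:ℝ)) + bF * D.indicator (fun _ => (1:ℝ)) | ℱ t]) ω ∂μ :=
        (setIntegral_condExp (hle t) (hprod1_int.add hprod2_int) hGS).symm
      have e3 : ∫ ω in G t ∩ S,
            (μ[aF * U.indicator (fun _ => (1:ℝ)) + bF * D.indicator (fun _ => (1:ℝ)) | ℱ t]) ω ∂μ
          ≤ ∫ ω in G t ∩ S, (h (M t ω) - c) ∂μ := by
        refine setIntegral_mono_on_ae (hf := integrable_condExp.integrableOn)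
          (hg := hsub_int.integrableOn) hGSm ?_
        filter_upwards [hcond, hup t, hdown t] with ω hcω hupω hdownω hmem
        obtain ⟨hG', hS'⟩ := hmem
        have hS'' : nn < M t ω := hS'
        rw [hcω]
        simp only [Pi.add_apply, Pi.mul_apply]
        rw [hupω hS'', hdownω hS'']
        have hmlt : M t ω < nn + r := hG' t le_rfl
        have hmid := hstep_mid (M t ω) hS'' hmlt
        have haFv : aF ω = h (M t ω + 1) := rfl
        have hbFv : bF ω = h (M t ω - 1) := rfl
        rw [haFv, hbFv]
        linarith
      rw [e1, e2]
      exact e3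
    -- bound on G t \ S
    have hISc : ∫ ω in G t \ S, h (M (t+1) ω) ∂μ ≤ ∫ ω in G t \ S, (h (M t ω) - c) ∂μ := by
      refine setIntegral_mono_on_ae (hf := hMt1_int.integrableOn)
        (hg := hsub_int.integrableOn) ((hGmeas t).diff hSmeas) ?_
      filter_upwards [hhalf t] with ω hω hmem
      obtain ⟨hG', hS'⟩ := hmem
      have hS'' : ¬ nn < M t ω := hS'
      have hMt : M t ω = nn := le_antisymm (by omega) ((hrange t ω).1)
      rw [hω hMt, hMt]
      exact hstep_half
    have hsplit1 : ∫ ω in G t ∩ S, h (M (t+1) ω) ∂μ + ∫ ω in G t \ S, h (M (t+1) ω) ∂μ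
        = ∫ ω in G t, h (M (t+1) ω) ∂μ := integral_inter_add_diff hSmeas hMt1_int.integrableOn
    have hsplit2 : ∫ ω in G t ∩ S, (h (M t ω) - c) ∂μ + ∫ ω in G t \ S, (h (M t ω) - c) ∂μ
        = ∫ ω in G t, (h (M t ω) - c) ∂μ := integral_inter_add_diff hSmeas hsub_int.integrableOn
    have hGle : ∫ ω in G t, h (M (t+1) ω) ∂μ ≤ ∫ ω in G t, (h (M t ω) - c) ∂μ := by
      rw [← hsplit1, ← hsplit2]
      exact add_le_add hIS hISc
    have hconst : ∫ ω in G t, (h (M t ω) - c) ∂μ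
        = ∫ ω in G t, h (M t ω) ∂μ - c * (μ (G t)).toReal := by
      rw [integral_sub (hint_hM t).integrableOn (integrable_const c).integrableOn,
        setIntegral_const, smul_eq_mul, mul_comm]
      rfl
    have hshrink : ∫ ω in G (t+1), h (M (t+1) ω) ∂μ ≤ ∫ ω in G t, h (M (t+1) ω) ∂μ :=
      setIntegral_mono_set hMt1_int.integrableOn (ae_of_all _ fun ω => hnonneg _)
        (HasSubset.Subset.eventuallyLE (hGmono t))
    linarith
  -- summation
  have hsum_fin : ∀ N : ℕ, ∑ t ∈ Finset.range N, c * (μ (G t)).toReal ≤ h m₀ := by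
    have key : ∀ N, ∑ t ∈ Finset.range N, c * (μ (G t)).toReal
        + ∫ ω in G N, h (M N ω) ∂μ ≤ ∫ ω in G 0, h (M 0 ω) ∂μ := by
      intro N
      induction N with
      | zero => simp
      | succ N ih =>
          rw [Finset.sum_range_succ]
          have hm := hmain N
          linarith
    intro N
    have h0 : ∫ ω in G 0, h (M 0 ω) ∂μ ≤ h m₀ := by
      have e1 : ∫ ω in G 0, h (M 0 ω) ∂μ = ∫ ω in G 0, h m₀ ∂μ :=
        setIntegral_congr_ae (hGmeas 0) (ae_of_all _ fun ω _ => by rw [hM0 ω])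
      rw [e1, setIntegral_const, smul_eq_mul]
      have hμ1 : (μ (G 0)).toReal ≤ 1 := by
        have := prob_le_one (μ := μ) (s := G 0)
        simpa using ENNReal.toReal_mono (by simp) this
      nlinarith [hnonneg m₀, ENNReal.toReal_nonneg (a := μ (G 0)), show μ.real (G 0) = (μ (G 0)).toReal from rfl]
    have hpos : 0 ≤ ∫ ω in G N, h (M N ω) ∂μ :=
      setIntegral_nonneg (hGmeas N) (fun ω _ => hnonneg _)
    linarith [key N]
  -- pass to ℝ≥0∞
  have hTlt : ∀ (ω : Ω) (t : ℕ), ω ∈ G t ↔ (t : ℕ∞) < T ω := by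
    intro ω t
    rw [hT ω]
    constructor
    · intro hω
      have hgt : ((t:ℕ∞) + 1) ≤ sInf ((↑) '' {s : ℕ | nn + r ≤ M s ω}) := by
        apply le_sInf
        rintro b ⟨s, hs, rfl⟩
        have hs' : nn + r ≤ M s ω := hs
        have hts : t < s := by
          by_contra hcon
          push_neg at hcon
          have := hω s hcon
          omega
        have : ((t+1 : ℕ) : ℕ∞) ≤ (s : ℕ∞) := by exact_mod_cast hts
        simpa using this
      have hlt1 : (t:ℕ∞) < (t:ℕ∞) + 1 := by
        have : ((t : ℕ) : ℕ∞) < ((t+1 : ℕ) : ℕ∞) := by exact_mod_cast Nat.lt_succ_self t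
        simpa using this
      exact lt_of_lt_of_le hlt1 hgt
    · intro hlt s hs
      by_contra hcon
      push_neg at hcon
      have hmem : (s : ℕ∞) ∈ (((↑) : ℕ → ℕ∞) '' {s : ℕ | nn + r ≤ M s ω}) := ⟨s, hcon, rfl⟩
      have h1 : sInf ((↑) '' {s : ℕ | nn + r ≤ M s ω}) ≤ (s : ℕ∞) := sInf_le hmem
      have h2 : (s:ℕ∞) ≤ (t:ℕ∞) := by exact_mod_cast hs
      exact absurd hlt (not_lt.mpr (h1.trans h2))
  have hpoint : ∀ ω, (T ω : ℝ≥0∞) = ∑' s : ℕ, (G s).indicator (fun _ => (1:ℝ≥0∞)) ω := by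
    intro ω
    rw [enat_cast_tsum (T ω)]
    apply tsum_congr
    intro s
    by_cases hs : ω ∈ G s
    · rw [if_pos ((hTlt ω s).mp hs), Set.indicator_of_mem hs]
    · rw [if_neg (fun hlt => hs ((hTlt ω s).mpr hlt)), Set.indicator_of_notMem hs]
  have hfinal : (∑' s : ℕ, μ (G s)) ≤ ENNReal.ofReal (h m₀ / c) := by
    rw [ENNReal.tsum_eq_iSup_sum]
    apply iSup_le
    intro fs
    obtain ⟨N, hN⟩ : ∃ N, fs ⊆ Finset.range N :=
      ⟨fs.sup id + 1, fun x hx => Finset.mem_range.mpr (Nat.lt_succ_of_le (Finset.le_sup (f := id) hx))⟩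
    calc ∑ s ∈ fs, μ (G s) ≤ ∑ s ∈ Finset.range N, μ (G s) :=
          Finset.sum_le_sum_of_subset hN
      _ = ENNReal.ofReal (∑ s ∈ Finset.range N, (μ (G s)).toReal) := by
          rw [ENNReal.ofReal_sum_of_nonneg (fun s _ => ENNReal.toReal_nonneg)]
          exact Finset.sum_congr rfl fun s _ => (ENNReal.ofReal_toReal (measure_ne_top μ _)).symm
      _ ≤ ENNReal.ofReal (h m₀ / c) := by
          apply ENNReal.ofReal_le_ofReal
          rw [le_div_iff₀ hcpos]
          have := hsum_fin N
          calc (∑ s ∈ Finset.range N, (μ (G s)).toReal) * c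
              = ∑ s ∈ Finset.range N, c * (μ (G s)).toReal := by
                rw [Finset.sum_mul]; exact Finset.sum_congr rfl fun s _ => by ring
            _ ≤ h m₀ := hsum_fin N
  calc ∫⁻ ω, (T ω : ℝ≥0∞) ∂μ
      = ∫⁻ ω, ∑' s : ℕ, (G s).indicator (fun _ => (1:ℝ≥0∞)) ω ∂μ :=
        lintegral_congr hpoint
    _ = ∑' s : ℕ, ∫⁻ ω, (G s).indicator (fun _ => (1:ℝ≥0∞)) ω ∂μ :=
        lintegral_tsum (fun s => (measurable_const.indicator (hGmeas s)).aemeasurable)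
    _ = ∑' s : ℕ, μ (G s) := by
        apply tsum_congr
        intro s
        rw [lintegral_indicator (hGmeas s)]
        simp
    _ ≤ ENNReal.ofReal (h m₀ / c) := hfinal
    _ = ENNReal.ofReal (3 * (r : ℝ) * h m₀ / (lam - 1)) := by
        congr 1
        rw [hc_def]
        field_simp
end

section
/- Consider the Markov chain (Z_t) on {0, 1, …, n} (n ≥ 2 even) where from state z > n/2, Z_{t+1} = z − 1 with probability z/n and Z_{t+1} = z + 1 with probability (n−z)/n. Let T = inf{t : Z_t ≤ n/2}. Then for any starting state z_0 with z_0 ≥ n/2 + 1, E[T] ≤ (n/2)·(1 + ln(z_0 − n/2)). -/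
open MeasureTheory Filter Set ENNReal

/-!
The potential `g z = 1 + log (z - n/2)` for `z > n/2` (and `0` otherwise) has additive drift
`2/n` before `T`. For `z ≥ n/2 + 2`, concavity of `log` bounds the expected change of
`log (z - n/2)` by `((n - z) - z) / (n (z - n/2)) = -2/n`; from `z = n/2 + 1` the step down
loses the whole potential `1`, and `log 2 ≤ 1` keeps the gain of the step up below that.
Summing the drift inequality over time bounds `E[T] = ∑ₜ P(T > t)` by `g z₀ / (2/n)`.
-/

noncomputable def logPotential (h z : ℕ) : ℝ := if h < z then 1 + Real.log ((z : ℝ) - h) else 0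

lemma logPotential_of_le {h z : ℕ} (hz : z ≤ h) : logPotential h z = 0 :=
  if_neg hz.not_gt

lemma logPotential_of_lt {h z : ℕ} (hz : h < z) :
    logPotential h z = 1 + Real.log ((z : ℝ) - h) :=
  if_pos hz

lemma logPotential_nonneg (h z : ℕ) : 0 ≤ logPotential h z := by
  rcases le_or_gt z h with hz | hz
  · exact (logPotential_of_le hz).ge
  · have : (h : ℝ) + 1 ≤ z := by exact_mod_cast hz
    rw [logPotential_of_lt hz]
    linarith [Real.log_nonneg (by linarith : (1 : ℝ) ≤ z - h)]

lemma Real.log_add_le_log_add_div {x d : ℝ} (hx : 0 < x) (hxd : 0 < x + d) :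
    Real.log (x + d) ≤ Real.log x + d / x := by
  have := Real.log_le_sub_one_of_pos (div_pos hxd hx)
  rw [Real.log_div hxd.ne' hx.ne', add_div, div_self hx.ne'] at this
  linarith

lemma logPotential_drift {n z : ℕ} (hn : 2 ≤ n) (heven : Even n) (hz : n / 2 < z) (hzn : z ≤ n) :
    logPotential (n / 2) (z - 1) * (z / n) + logPotential (n / 2) (z + 1) * ((n - z) / n)
      ≤ logPotential (n / 2) z - 2 / n := by
  obtain ⟨h, rfl⟩ := heven
  rw [show (h + h) / 2 = h by omega] at hz ⊢
  have hh : (1 : ℝ) ≤ h := by exact_mod_cast (by omega : 1 ≤ h)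
  have hzn' : (z : ℝ) ≤ h + h := by exact_mod_cast hzn
  push_cast
  rcases (Nat.succ_le_of_lt hz).eq_or_lt with rfl | hz2
  · -- from `h + 1` the step down loses the whole potential `1`
    rw [Nat.succ_sub_one, logPotential_of_le le_rfl, logPotential_of_lt (by omega),
      logPotential_of_lt (by omega)]
    push_cast
    rw [show (h : ℝ) + 1 + 1 - h = 2 by ring, show (h : ℝ) + 1 - h = 1 by ring, Real.log_one,
      ← sub_nonneg]
    have hlog2 : Real.log 2 ≤ 1 := by
      linarith [Real.log_le_sub_one_of_pos (by norm_num : (0 : ℝ) < 2)]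
    have hgap : 1 + 0 - 2 / ((h : ℝ) + h)
        - (0 * ((h + 1) / (h + h)) + (1 + Real.log 2) * ((h + h - (h + 1)) / (h + h)))
        = (1 - Real.log 2) * (h - 1) / (h + h) := by
      field_simp
      ring
    rw [hgap]
    exact div_nonneg (mul_nonneg (by linarith) (by linarith)) (by linarith)
  · have hx : (h : ℝ) + 1 < z := by exact_mod_cast hz2
    have hdown : Real.log (z - 1 - h) ≤ Real.log (z - h) + -1 / (z - h) := by
      rw [sub_right_comm]
      exact Real.log_add_le_log_add_div (by linarith) (by linarith)
    have hup : Real.log (z + 1 - h) ≤ Real.log (z - h) + 1 / (z - h) := by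
      rw [add_sub_right_comm]
      exact Real.log_add_le_log_add_div (by linarith) (by linarith)
    have hw : (0 : ℝ) ≤ (h + h - z) / (h + h) := div_nonneg (by linarith) (by linarith)
    rw [logPotential_of_lt (by omega), logPotential_of_lt (by omega), logPotential_of_lt hz,
      Nat.cast_sub (by omega : 1 ≤ z)]
    push_cast
    calc (1 + Real.log (z - 1 - h)) * (z / (h + h))
          + (1 + Real.log (z + 1 - h)) * ((h + h - z) / (h + h))
        ≤ (1 + (Real.log (z - h) + -1 / (z - h))) * (z / (h + h))
          + (1 + (Real.log (z - h) + 1 / (z - h))) * ((h + h - z) / (h + h)) := by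
          gcongr
      _ = 1 + Real.log (z - h) - 2 / (h + h) := by
          have : (z : ℝ) - h ≠ 0 := by linarith
          field_simp
          ring

lemma ENat.toENNReal_eq_tsum_indicator (a : ℕ∞) :
    (a : ℝ≥0∞) = ∑' t : ℕ, (Ioi (t : ℕ∞)).indicator 1 a := by
  induction a using ENat.recTopCoe with
  | top => simp
  | coe k =>
    rw [tsum_eq_sum (s := Finset.range k) (fun t ht => by simpa using ht),
      Finset.sum_congr rfl fun t ht => indicator_of_mem (mem_Ioi.2 (by simpa using ht)) _]
    simp

lemma ENat.coe_lt_sInf_image_setOf_iff (P : ℕ → Prop) (t : ℕ) :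
    (t : ℕ∞) < sInf ((↑) '' {s | P s}) ↔ ∀ s ≤ t, ¬ P s := by
  rw [← ENat.add_one_le_iff (ENat.natCast_ne_top t), le_sInf_iff, forall_mem_image]
  refine forall_congr' fun s => ?_
  rw [ENat.add_one_le_iff (ENat.natCast_ne_top t), Nat.cast_lt, ← not_le, mem_ofPred_eq,
    imp_not_comm]

lemma abs_le_sum_range_abs (φ : ℕ → ℝ) {k N : ℕ} (hk : k ≤ N) :
    |φ k| ≤ ∑ j ∈ Finset.range (N + 1), |φ j| :=
  Finset.single_le_sum (fun j _ => abs_nonneg (φ j)) (Finset.mem_range.2 (Nat.lt_succ_of_le hk))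

section Integrals

variable {Ω : Type*} {m m0 : MeasurableSpace Ω} {μ : Measure Ω}

lemma lintegral_enat_eq_tsum_measure_lt {T : Ω → ℕ∞}
    (hT : ∀ t : ℕ, MeasurableSet {ω | (t : ℕ∞) < T ω}) :
    ∫⁻ ω, (T ω : ℝ≥0∞) ∂μ = ∑' t : ℕ, μ {ω | (t : ℕ∞) < T ω} := by
  rw [lintegral_congr fun ω => ENat.toENNReal_eq_tsum_indicator (T ω)]
  change ∫⁻ ω, ∑' t : ℕ, {ω | (t : ℕ∞) < T ω}.indicator 1 ω ∂μ = _
  rw [lintegral_tsum fun t => ((measurable_one.indicator (hT t))).aemeasurable]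
  exact tsum_congr fun t => lintegral_indicator_one (hT t)

lemma MeasureTheory.Integrable.mul_indicator_one {g : Ω → ℝ} (hg : Integrable g μ) {S : Set Ω}
    (hS : MeasurableSet S) : Integrable (g * S.indicator (fun _ => 1)) μ := by
  have : g * S.indicator (fun _ => 1) = S.indicator g := by
    funext ω; by_cases hω : ω ∈ S <;> simp [hω]
  exact this ▸ hg.indicator hS

variable [IsFiniteMeasure μ]

lemma integrable_comp_of_le {W : Ω → ℕ} (hW : Measurable W) {N : ℕ} (hWN : ∀ ω, W ω ≤ N)
    (φ : ℕ → ℝ) : Integrable (fun ω => φ (W ω)) μ :=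
  .of_bound (measurable_from_top.comp hW).aestronglyMeasurable _
    (ae_of_all _ fun ω => abs_le_sum_range_abs φ (hWN ω))

lemma condExp_comp_le_of_moves_by_one (hm : m ≤ m0) {X Y : Ω → ℕ} (hX : Measurable[m] X)
    (hY : Measurable Y) {N : ℕ} (hXN : ∀ ω, X ω ≤ N) (hYN : ∀ ω, Y ω ≤ N) (φ : ℕ → ℝ) :
    ∀ᵐ ω ∂μ,
      μ[{ω | Y ω = X ω - 1}.indicator (fun _ => (1 : ℝ)) | m] ω
        + μ[{ω | Y ω = X ω + 1}.indicator (fun _ => (1 : ℝ)) | m] ω = 1 →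
      μ[fun ω => φ (Y ω) | m] ω
        ≤ φ (X ω - 1) * μ[{ω | Y ω = X ω - 1}.indicator (fun _ => (1 : ℝ)) | m] ω
          + φ (X ω + 1) * μ[{ω | Y ω = X ω + 1}.indicator (fun _ => (1 : ℝ)) | m] ω := by
  set D := {ω | Y ω = X ω - 1}
  set U := {ω | Y ω = X ω + 1}
  set B := ∑ j ∈ Finset.range (N + 1), |φ j|
  have hX0 : Measurable X := hX.mono hm le_rfl
  have hD : MeasurableSet D := measurableSet_eq_fun hY (hX0.sub_const 1)
  have hU : MeasurableSet U := measurableSet_eq_fun hY (hX0.add_const 1)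
  have hDU : Disjoint D U := Set.disjoint_left.2 fun ω hωD hωU => by
    simp only [D, U, mem_ofPred_eq] at hωD hωU; omega
  set g₁ : Ω → ℝ := fun ω => φ (X ω - 1) - B
  set g₂ : Ω → ℝ := fun ω => φ (X ω + 1) - B
  -- off `D ∪ U` the step is only bounded by `B`; that case has conditional probability `0`
  have hbound : (fun ω => φ (Y ω))
      ≤ (fun _ => B) + g₁ * D.indicator (fun _ => 1) + g₂ * U.indicator (fun _ => 1) := by
    intro ω
    by_cases hωD : ω ∈ D
    · simp [g₁, g₂, hωD, hDU.notMem_of_mem_left hωD, show Y ω = X ω - 1 from hωD]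
    by_cases hωU : ω ∈ U
    · simp [g₁, g₂, hωU, hωD, show Y ω = X ω + 1 from hωU]
    · simpa [hωD, hωU] using (le_abs_self _).trans (abs_le_sum_range_abs φ (hYN ω))
  have hg₁ : StronglyMeasurable[m] g₁ :=
    ((measurable_from_top.comp (hX.sub_const 1)).sub_const B).stronglyMeasurable
  have hg₂ : StronglyMeasurable[m] g₂ :=
    ((measurable_from_top.comp (hX.add_const 1)).sub_const B).stronglyMeasurable
  have hind : ∀ {S : Set Ω}, MeasurableSet S → Integrable (S.indicator (fun _ => (1 : ℝ))) μ :=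
    fun hS => (integrable_const 1).indicator hS
  have hgi₁ : Integrable g₁ μ :=
    (integrable_comp_of_le (hX0.sub_const 1) (fun ω => (Nat.sub_le _ _).trans (hXN ω)) φ).sub
      (integrable_const B)
  have hgi₂ : Integrable g₂ μ :=
    (integrable_comp_of_le (hX0.add_const 1) (fun ω => Nat.add_le_add_right (hXN ω) 1) φ).sub
      (integrable_const B)
  filter_upwards [condExp_mono (m := m) (integrable_comp_of_le hY hYN φ)
      (((integrable_const B).add (hgi₁.mul_indicator_one hD)).add (hgi₂.mul_indicator_one hU))
      (ae_of_all _ hbound),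
    condExp_add ((integrable_const B).add (hgi₁.mul_indicator_one hD))
      (hgi₂.mul_indicator_one hU) m,
    condExp_add (integrable_const B) (hgi₁.mul_indicator_one hD) m,
    condExp_mul_of_stronglyMeasurable_left hg₁ (hgi₁.mul_indicator_one hD) (hind hD),
    condExp_mul_of_stronglyMeasurable_left hg₂ (hgi₂.mul_indicator_one hU) (hind hU)]
    with ω hmono hadd₁ hadd₂ hmul₁ hmul₂ hsum
  rw [condExp_const hm B] at hadd₂
  simp only [Pi.add_apply, Pi.mul_apply] at hmono hadd₁ hadd₂ hmul₁ hmul₂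
  rw [hadd₁, hadd₂, hmul₁, hmul₂] at hmono
  simp only [g₁, g₂] at hmono
  linear_combination hmono - B * hsum

end Integrals

section Drift

variable {Ω : Type*} {m0 : MeasurableSpace Ω} {μ : Measure Ω} [IsFiniteMeasure μ]
  {ℱ : Filtration ℕ m0} {X : ℕ → Ω → ℝ} {A : ℕ → Set Ω} {δ : ℝ}

lemma mul_measureReal_add_setIntegral_succ_le_of_drift (hint : ∀ t, Integrable (X t) μ)
    (hnonneg : ∀ t ω, 0 ≤ X t ω) (hA : ∀ t, MeasurableSet[ℱ t] (A t)) (hanti : Antitone A)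
    (hdrift : ∀ t, ∀ᵐ ω ∂μ, ω ∈ A t → μ[X (t + 1) | ℱ t] ω ≤ X t ω - δ) (t : ℕ) :
    δ * μ.real (A t) + ∫ ω in A (t + 1), X (t + 1) ω ∂μ ≤ ∫ ω in A t, X t ω ∂μ := by
  have hAt : MeasurableSet (A t) := ℱ.le t _ (hA t)
  calc δ * μ.real (A t) + ∫ ω in A (t + 1), X (t + 1) ω ∂μ
      ≤ δ * μ.real (A t) + ∫ ω in A t, X (t + 1) ω ∂μ := by
        refine add_le_add le_rfl (setIntegral_mono_set (hint _).integrableOn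
          (ae_of_all _ (hnonneg _)) (hanti (Nat.le_succ t)).eventuallyLE)
    _ = δ * μ.real (A t) + ∫ ω in A t, μ[X (t + 1) | ℱ t] ω ∂μ := by
        rw [setIntegral_condExp (ℱ.le t) (hint _) (hA t)]
    _ ≤ δ * μ.real (A t) + ∫ ω in A t, (X t ω - δ) ∂μ := by
        refine add_le_add le_rfl (setIntegral_mono_ae_restrict integrable_condExp.integrableOn
          ((hint t).sub (integrable_const δ)).integrableOn
          ((ae_restrict_iff' hAt).2 (hdrift t)))
    _ = ∫ ω in A t, X t ω ∂μ := by
        rw [integral_sub (hint t).integrableOn (integrable_const δ).integrableOn,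
          setIntegral_const, smul_eq_mul]
        ring

theorem tsum_measure_le_of_drift (hδ : 0 < δ) (hint : ∀ t, Integrable (X t) μ)
    (hnonneg : ∀ t ω, 0 ≤ X t ω) (hA : ∀ t, MeasurableSet[ℱ t] (A t)) (hanti : Antitone A)
    (hdrift : ∀ t, ∀ᵐ ω ∂μ, ω ∈ A t → μ[X (t + 1) | ℱ t] ω ≤ X t ω - δ) :
    ∑' t, μ (A t) ≤ ENNReal.ofReal ((∫ ω, X 0 ω ∂μ) / δ) := by
  have htelescope : ∀ N, δ * ∑ t ∈ Finset.range N, μ.real (A t) + ∫ ω in A N, X N ω ∂μ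
      ≤ ∫ ω in A 0, X 0 ω ∂μ := by
    intro N
    induction N with
    | zero => simp
    | succ N ih =>
      have := mul_measureReal_add_setIntegral_succ_le_of_drift hint hnonneg hA hanti hdrift N
      rw [Finset.sum_range_succ, mul_add]
      linarith
  refine ENNReal.tsum_le_of_sum_range_le fun N => ?_
  have hsum : δ * ∑ t ∈ Finset.range N, μ.real (A t) ≤ ∫ ω, X 0 ω ∂μ := by
    have hlast : 0 ≤ ∫ ω in A N, X N ω ∂μ :=
      setIntegral_nonneg (ℱ.le N _ (hA N)) fun ω _ => hnonneg N ω
    have hfirst : ∫ ω in A 0, X 0 ω ∂μ ≤ ∫ ω, X 0 ω ∂μ :=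
      setIntegral_le_integral (hint 0) (ae_of_all _ (hnonneg 0))
    linarith [htelescope N]
  rw [← Finset.sum_congr rfl fun t _ => ofReal_measureReal (μ := μ) (s := A t),
    ← ENNReal.ofReal_sum_of_nonneg fun t _ => measureReal_nonneg]
  exact ENNReal.ofReal_le_ofReal ((le_div_iff₀' hδ).2 hsum)

end Drift

/-- RLS on Majority_0 starting with a majority of zeros: expected time to reach a
balanced string is at most `(n/2)(1 + ln(z₀ - n/2))`. -/
theorem rls_majority_return_time
    {Ω : Type*} {m0' : MeasurableSpace Ω} (μ : Measure Ω) [IsProbabilityMeasure μ]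
    (ℱ : Filtration ℕ m0') (n : ℕ) (hn : 2 ≤ n) (heven : Even n)
    (Z : ℕ → Ω → ℕ) (hadapt : Adapted ℱ fun t ω => (Z t ω : ℝ))
    (hrange : ∀ t ω, Z t ω ≤ n)
    (hdown : ∀ t : ℕ, ∀ᵐ ω ∂μ, n / 2 < Z t ω →
      (μ[Set.indicator {ω' | Z (t + 1) ω' = Z t ω' - 1} (fun _ => (1 : ℝ)) | ℱ t]) ω
        = (Z t ω : ℝ) / n)
    (hup : ∀ t : ℕ, ∀ᵐ ω ∂μ, n / 2 < Z t ω →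
      (μ[Set.indicator {ω' | Z (t + 1) ω' = Z t ω' + 1} (fun _ => (1 : ℝ)) | ℱ t]) ω
        = ((n : ℝ) - Z t ω) / n)
    (z₀ : ℕ) (hz0 : n / 2 + 1 ≤ z₀) (hZ0 : ∀ ω, Z 0 ω = z₀)
    (T : Ω → ℕ∞)
    (hT : ∀ ω, T ω = sInf ((↑) '' {t : ℕ | Z t ω ≤ n / 2})) :
    ∫⁻ ω, (T ω : ℝ≥0∞) ∂μ ≤
      ENNReal.ofReal (((n : ℝ) / 2) * (1 + Real.log ((z₀ : ℝ) - (n : ℝ) / 2))) := by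
  have hZ : ∀ t, Measurable[ℱ t] (Z t) := fun t =>
    MeasurableEmbedding.natCast.measurable_comp_iff.1 (hadapt t)
  have hlt_T : ∀ (t : ℕ) ω, (t : ℕ∞) < T ω ↔ ∀ s ≤ t, n / 2 < Z s ω := fun t ω => by
    simp only [hT, ENat.coe_lt_sInf_image_setOf_iff, not_le]
  have hA : ∀ t : ℕ, MeasurableSet[ℱ t] {ω | (t : ℕ∞) < T ω} := fun t => by
    simp_rw [hlt_T, ofPred_forall]
    exact .iInter fun s => .iInter fun hs =>
      measurableSet_lt measurable_const ((hZ s).mono (ℱ.mono hs) le_rfl)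
  have hdrift : ∀ t : ℕ, ∀ᵐ ω ∂μ, ω ∈ {ω | (t : ℕ∞) < T ω} →
      μ[fun ω => logPotential (n / 2) (Z (t + 1) ω) | ℱ t] ω
        ≤ logPotential (n / 2) (Z t ω) - 2 / n := fun t => by
    filter_upwards [hdown t, hup t, condExp_comp_le_of_moves_by_one (ℱ.le t) (hZ t)
      ((hZ (t + 1)).mono (ℱ.le _) le_rfl) (hrange t) (hrange (t + 1)) (logPotential (n / 2))]
      with ω hD hU hstep hω
    have hz : n / 2 < Z t ω := (hlt_T t ω).1 hω t le_rfl
    rw [hD hz, hU hz] at hstep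
    have hn0 : (n : ℝ) ≠ 0 := by positivity
    exact (hstep (by field_simp; ring)).trans (logPotential_drift hn heven hz (hrange t ω))
  rw [lintegral_enat_eq_tsum_measure_lt fun t => ℱ.le t _ (hA t)]
  refine (tsum_measure_le_of_drift (X := fun t ω => logPotential (n / 2) (Z t ω))
    (by positivity)
    (fun t => integrable_comp_of_le ((hZ t).mono (ℱ.le t) le_rfl) (hrange t) _)
    (fun t ω => logPotential_nonneg _ _) hA
    (fun s t hst ω (hω : (t : ℕ∞) < T ω) => (Nat.cast_le.2 hst).trans_lt hω) hdrift).trans_eq ?_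
  simp only [hZ0, integral_const, probReal_univ, one_smul,
    logPotential_of_lt (by omega : n / 2 < z₀), Nat.cast_div heven.two_dvd (two_ne_zero' ℝ),
    Nat.cast_ofNat]
  congr 1
  field_simp
end

section
/- Let n ∈ ℕ be even and positive and r ∈ {1, …, n/2} with 3r(n − 2(r−1)) − 2n > 0, and let λ = 3r(n + 2(r−1))/(3r(n − 2(r−1)) − 2n). If r is bounded (r = O(1) as n → ∞), then λ − 1 = Θ(1); if r = O(√n) then λ ≤ 1 + C/r for some constant C, and hence λ^r ≤ e^C is bounded by a constant. -/
/-!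
With `D = 3r(n - 2(r - 1)) - 2n` the denominator of `λ`, we have `λ - 1 = (12r(r - 1) + 2n) / D`.
Since `D ≤ 3rn`, this is at least `2/(3r)`; once `12r ≤ n`, `D ≥ rn/2`, so it is at most
`24r/n + 4/r`. For bounded `r` both bounds are constants; for `r ≤ C√n` the first term is at
most `24C²/r`, so `λ ≤ 1 + K/r` and `λ^r ≤ (1 + K/r)^r ≤ e^K`.
-/

open Filter

noncomputable def driftBase (x n : ℝ) : ℝ :=
  3 * x * (n + 2 * (x - 1)) / (3 * x * (n - 2 * (x - 1)) - 2 * n)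

section driftBase

variable {x n : ℝ}

lemma driftBase_sub_one (hD : 3 * x * (n - 2 * (x - 1)) - 2 * n ≠ 0) :
    driftBase x n - 1 = (12 * x * (x - 1) + 2 * n) / (3 * x * (n - 2 * (x - 1)) - 2 * n) := by
  rw [driftBase, eq_div_iff hD, sub_mul, div_mul_cancel₀ _ hD]
  ring

lemma two_div_three_mul_le_driftBase_sub_one (hx : 1 ≤ x) (hn : 0 ≤ n)
    (hD : 0 < 3 * x * (n - 2 * (x - 1)) - 2 * n) :
    2 / (3 * x) ≤ driftBase x n - 1 := by
  rw [driftBase_sub_one hD.ne', div_le_div_iff₀ (by positivity) hD]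
  nlinarith [mul_nonneg (mul_nonneg (by linarith : (0 : ℝ) ≤ x) (by linarith : (0 : ℝ) ≤ x))
    (by linarith : (0 : ℝ) ≤ x - 1)]

lemma half_mul_le_denom (hx : 1 ≤ x) (hxn : 12 * x ≤ n) :
    x * n / 2 ≤ 3 * x * (n - 2 * (x - 1)) - 2 * n := by
  nlinarith [mul_le_mul_of_nonneg_left hxn (by linarith : (0 : ℝ) ≤ x)]

lemma driftBase_sub_one_le (hx : 1 ≤ x) (hxn : 12 * x ≤ n) :
    driftBase x n - 1 ≤ 24 * x / n + 4 / x := by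
  have hx0 : 0 < x := by linarith
  have hn0 : 0 < n := by linarith
  have hD := half_mul_le_denom hx hxn
  calc driftBase x n - 1
      = (12 * x * (x - 1) + 2 * n) / (3 * x * (n - 2 * (x - 1)) - 2 * n) :=
        driftBase_sub_one (by nlinarith)
    _ ≤ (12 * x ^ 2 + 2 * n) / (x * n / 2) :=
        div_le_div₀ (by positivity) (by nlinarith) (by positivity) hD
    _ = 24 * x / n + 4 / x := by field_simp; ring

lemma driftBase_sub_one_le_six (hx : 1 ≤ x) (hxn : 12 * x ≤ n) : driftBase x n - 1 ≤ 6 := by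
  have hn0 : 0 < n := by linarith
  have h₁ : 24 * x / n ≤ 2 := by rw [div_le_iff₀ hn0]; linarith
  have h₂ : 4 / x ≤ 4 := div_le_self (by norm_num) hx
  linarith [driftBase_sub_one_le hx hxn]

lemma driftBase_le_one_add_div {C : ℝ} (hx : 1 ≤ x) (hxC : x ≤ C * Real.sqrt n)
    (hn : 144 * C ^ 2 ≤ n) :
    driftBase x n ≤ 1 + (24 * C ^ 2 + 4) / x := by
  have hx0 : 0 < x := by linarith
  have hn0 : 0 ≤ n := by nlinarith [sq_nonneg C]
  have hC : 0 < C := by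
    by_contra! hC
    nlinarith [mul_nonpos_of_nonpos_of_nonneg hC (Real.sqrt_nonneg n)]
  have hsqrt : 12 * C ≤ Real.sqrt n := by
    simpa [show (144 * C ^ 2 : ℝ) = (12 * C) ^ 2 by ring, Real.sqrt_sq, hC.le]
      using Real.sqrt_le_sqrt hn
  have hxn : 12 * x ≤ n := calc
    12 * x ≤ 12 * C * Real.sqrt n := by linarith
    _ ≤ Real.sqrt n * Real.sqrt n := by gcongr
    _ = n := Real.mul_self_sqrt hn0
  have hsq : x ^ 2 ≤ C ^ 2 * n := calc
    x ^ 2 ≤ (C * Real.sqrt n) ^ 2 := by gcongr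
    _ = C ^ 2 * n := by rw [mul_pow, Real.sq_sqrt hn0]
  have hfirst : 24 * x / n ≤ 24 * C ^ 2 / x := by
    rw [div_le_div_iff₀ (by linarith) hx0]; nlinarith
  have := driftBase_sub_one_le hx hxn
  rw [add_div]
  linarith

end driftBase

lemma pow_le_exp_of_le_one_add_div {a K : ℝ} {m : ℕ} (hm : 0 < m) (ha : 0 ≤ a)
    (h : a ≤ 1 + K / m) : a ^ m ≤ Real.exp K := calc
  a ^ m ≤ Real.exp (K / m) ^ m := by
    gcongr
    linarith [Real.add_one_le_exp (K / m)]
  _ = Real.exp K := by rw [← Real.exp_nat_mul, mul_div_cancel₀ _ (by positivity)]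

/-- Asymptotic behavior of the drift base λ: for bounded `r` we have `λ - 1 = Θ(1)`,
and for `r = O(√n)` we have `λ ≤ 1 + C/r`, hence `λ^r ≤ e^C` is bounded. -/
theorem lambda_asymptotics
    (N r : ℕ → ℕ)
    (hcond : ∀ i, Even (N i) ∧ 0 < N i ∧ 1 ≤ r i ∧ r i ≤ N i / 2 ∧
      0 < 3 * (r i : ℝ) * ((N i : ℝ) - 2 * ((r i : ℝ) - 1)) - 2 * (N i : ℝ))
    (hN : Tendsto N atTop atTop)
    (lam : ℕ → ℝ)
    (hlam : ∀ i, lam i = 3 * (r i : ℝ) * ((N i : ℝ) + 2 * ((r i : ℝ) - 1)) /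
      (3 * (r i : ℝ) * ((N i : ℝ) - 2 * ((r i : ℝ) - 1)) - 2 * (N i : ℝ))) :
    ((∃ C : ℕ, ∀ i, r i ≤ C) →
        ∃ c₁ c₂ : ℝ, 0 < c₁ ∧ 0 < c₂ ∧
          ∀ᶠ i in atTop, c₁ ≤ lam i - 1 ∧ lam i - 1 ≤ c₂) ∧
      ((∃ C : ℝ, ∀ i, (r i : ℝ) ≤ C * Real.sqrt (N i)) →
        ∃ C' : ℝ, 0 < C' ∧
          ∀ᶠ i in atTop, lam i ≤ 1 + C' / (r i : ℝ) ∧ lam i ^ (r i) ≤ Real.exp C') := by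
  have hNR : Tendsto (fun i => (N i : ℝ)) atTop atTop := tendsto_natCast_atTop_atTop.comp hN
  have hr : ∀ i, (1 : ℝ) ≤ r i := fun i => by exact_mod_cast (hcond i).2.2.1
  have hlam_ge : ∀ i, 2 / (3 * (r i : ℝ)) ≤ lam i - 1 := fun i => by
    rw [hlam i]
    exact two_div_three_mul_le_driftBase_sub_one (hr i) (N i).cast_nonneg (hcond i).2.2.2.2
  constructor
  · rintro ⟨C, hC⟩
    have hCr : ∀ i, (r i : ℝ) ≤ C := fun i => by exact_mod_cast hC i
    refine ⟨2 / (3 * C), 6, by have := (hr 0).trans (hCr 0); positivity, by norm_num, ?_⟩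
    filter_upwards [hNR.eventually_ge_atTop (12 * C)] with i hn
    have hlower : 2 / (3 * (C : ℝ)) ≤ 2 / (3 * (r i : ℝ)) :=
      div_le_div_of_nonneg_left (by norm_num) (by linarith [hr i]) (by linarith [hCr i])
    refine ⟨hlower.trans (hlam_ge i), ?_⟩
    rw [hlam i]
    exact driftBase_sub_one_le_six (hr i) (by linarith [hCr i])
  · rintro ⟨C, hC⟩
    refine ⟨24 * C ^ 2 + 4, by positivity, ?_⟩
    filter_upwards [hNR.eventually_ge_atTop (144 * C ^ 2)] with i hn
    have hle : lam i ≤ 1 + (24 * C ^ 2 + 4) / r i := by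
      rw [hlam i]
      exact driftBase_le_one_add_div (hr i) (hC i) hn
    have hpos : 0 < r i := by exact_mod_cast (hcond i).2.2.1
    have hlam0 : 0 ≤ lam i := by
      linarith [hlam_ge i, show 0 ≤ 2 / (3 * (r i : ℝ)) by positivity]
    exact ⟨hle, pow_le_exp_of_le_one_add_div hpos hlam0 hle⟩
end
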